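/- arXiv:1605.08651 — 5 statements merged into one kernel-verified Lean document; each statement's English description precedes it below -/
import Mathlib

section
/- Let p ≥ 2, s ∈ [1, p/2] and n ≥ 1 be integers. If for some matrix X ∈ ℝ^{n×p} and some b > 0 one has θ̄_max(X,2s)/θ̄_min(X,2s) ≤ b (in particular θ̄_min(X,2s) > 0), then there exists a constant c = c(b) > 0 depending only on b such that s·log(ep/s) < c·R, where R is the rank of X. -/
open MeasureTheory ProbabilityTheory Real Finset
open scoped ENNReal NNReal BigOperators Classical

noncomputable section

/-- Empirical norm `‖u‖ₙ = √((1/n) ∑ᵢ uᵢ²)`. -/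
def normn (n : ℕ) (u : Fin n → ℝ) : ℝ := Real.sqrt ((∑ i, (u i) ^ 2) / n)

/-- Euclidean (`ℓ₂`) norm on `ℝᵖ`. -/
def l2 (p : ℕ) (u : Fin p → ℝ) : ℝ := Real.sqrt (∑ j, (u j) ^ 2)

/-- `ℓ₁` norm on `ℝᵖ`. -/
def l1 (p : ℕ) (u : Fin p → ℝ) : ℝ := ∑ j, |u j|

/-- Number of nonzero coordinates `‖u‖₀`. -/
def sparsity (p : ℕ) (u : Fin p → ℝ) : ℕ := (Finset.univ.filter fun j => u j ≠ 0).card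

/-- Non-increasing rearrangement of `(|u₁|,…,|u_p|)`:
`sharp p u j` is the `(j+1)`-st largest value among the `|u i|` (0-indexed `j`). -/
def sharp (p : ℕ) (u : Fin p → ℝ) : Fin p → ℝ :=
  fun j => |u ((Tuple.sort fun i => -|u i|) j)|

/-- The minimal `s`-sparse eigenvalue `θ̄_min(X,s)`. -/
def thetaMinS (n p : ℕ) (X : Matrix (Fin n) (Fin p) ℝ) (s : ℕ) : ℝ :=
  sInf ((fun δ => normn n (X.mulVec δ) / l2 p δ) ''
    {δ : Fin p → ℝ | δ ≠ 0 ∧ sparsity p δ ≤ s})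

/-- The maximal `s`-sparse eigenvalue `θ̄_max(X,s)`. -/
def thetaMaxS (n p : ℕ) (X : Matrix (Fin n) (Fin p) ℝ) (s : ℕ) : ℝ :=
  sSup ((fun δ => normn n (X.mulVec δ) / l2 p δ) ''
    {δ : Fin p → ℝ | δ ≠ 0 ∧ sparsity p δ ≤ s})

/-! ### Auxiliary lemmas -/

section Aux

lemma serr_hamming_ball_card (s q r : ℕ) (hq : 1 ≤ q) (c : Fin s → Fin q) :
    ((Finset.univ.filter fun y : Fin s → Fin q => hammingDist y c ≤ r)).card ≤ 2 ^ s * q ^ r := by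
  classical
  have hsub : (Finset.univ.filter fun y : Fin s → Fin q => hammingDist y c ≤ r) ⊆
      (Finset.univ.powerset.filter fun D : Finset (Fin s) => D.card ≤ r).biUnion
        (fun D => Fintype.piFinset fun j => if j ∈ D then Finset.univ else {c j}) := by
    intro y hy
    simp only [mem_filter, mem_univ, true_and] at hy
    refine Finset.mem_biUnion.2 ⟨Finset.univ.filter fun j => y j ≠ c j, ?_, ?_⟩
    · simp only [mem_filter, mem_powerset]
      exact ⟨Finset.subset_univ _, hy⟩
    · refine Fintype.mem_piFinset.2 fun j => ?_
      by_cases h : y j = c j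
      · simp [h]
      · simp [h]
  calc ((Finset.univ.filter fun y : Fin s → Fin q => hammingDist y c ≤ r)).card
      ≤ _ := Finset.card_le_card hsub
    _ ≤ ∑ D ∈ (Finset.univ.powerset.filter fun D : Finset (Fin s) => D.card ≤ r),
          (Fintype.piFinset fun j => if j ∈ D then (Finset.univ : Finset (Fin q)) else {c j}).card :=
        Finset.card_biUnion_le
    _ ≤ ∑ D ∈ (Finset.univ.powerset.filter fun D : Finset (Fin s) => D.card ≤ r), q ^ r := by
        refine Finset.sum_le_sum fun D hD => ?_
        simp only [mem_filter] at hD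
        rw [Fintype.card_piFinset]
        calc ∏ j, (if j ∈ D then (Finset.univ : Finset (Fin q)) else {c j}).card
            = ∏ j, (if j ∈ D then q else 1) := by
              refine Finset.prod_congr rfl fun j _ => ?_
              split <;> simp
          _ = q ^ D.card := by
              rw [Finset.prod_ite_mem, Finset.univ_inter, Finset.prod_const]
          _ ≤ q ^ r := Nat.pow_le_pow_right hq hD.2
    _ ≤ 2 ^ s * q ^ r := by
        rw [Finset.sum_const, smul_eq_mul]
        have : (Finset.univ.powerset.filter fun D : Finset (Fin s) => D.card ≤ r).card ≤ 2 ^ s := by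
          calc _ ≤ (Finset.univ : Finset (Fin s)).powerset.card := Finset.card_filter_le _ _
            _ = 2 ^ s := by simp [Finset.card_powerset]
        exact Nat.mul_le_mul_right _ this


lemma serr_exists_code_aux (s q d : ℕ) (hq : 1 ≤ q) (hd : 1 ≤ d) (A : Finset (Fin s → Fin q)) :
    ∃ C : Finset (Fin s → Fin q), C ⊆ A ∧
      (∀ x ∈ C, ∀ y ∈ C, x ≠ y → d ≤ hammingDist x y) ∧
      A.card ≤ 2 ^ s * q ^ (d - 1) * C.card := by
  classical
  induction A using Finset.strongInduction with
  | _ A ih =>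
    rcases A.eq_empty_or_nonempty with rfl | ⟨x, hx⟩
    · exact ⟨∅, Finset.Subset.refl _, by simp, by simp⟩
    · set B := Finset.univ.filter fun y : Fin s → Fin q => hammingDist y x ≤ d - 1 with hB
      have hxB : x ∈ B := by simp [hB, hammingDist_self]
      set A' := A \ B with hA'
      have hA'sub : A' ⊆ A := Finset.sdiff_subset
      have hA'ss : A' ⊂ A := by
        refine Finset.ssubset_iff_of_subset hA'sub |>.2 ⟨x, hx, ?_⟩
        simp [hA', hxB]
      obtain ⟨C', hC'sub, hC'pair, hC'card⟩ := ih A' hA'ss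
      have hxC' : x ∉ C' := fun h => by
        have := hC'sub h
        simp [hA', hxB] at this
      refine ⟨insert x C', ?_, ?_, ?_⟩
      · exact Finset.insert_subset hx (hC'sub.trans hA'sub)
      · intro a ha b hb hab
        have key : ∀ y ∈ C', d ≤ hammingDist y x := by
          intro y hy
          have hyA' := hC'sub hy
          have : ¬ hammingDist y x ≤ d - 1 := by
            intro hle
            have : y ∈ B := by simp [hB, hle]
            simp [hA', this] at hyA'
          omega
        rcases Finset.mem_insert.1 ha with rfl | ha'
        · rcases Finset.mem_insert.1 hb with rfl | hb'
          · exact absurd rfl hab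
          · rw [hammingDist_comm]; exact key b hb'
        · rcases Finset.mem_insert.1 hb with rfl | hb'
          · exact key a ha'
          · exact hC'pair a ha' b hb' hab
      · have h1 : A.card ≤ A'.card + B.card := by
          calc A.card ≤ (A' ∪ B).card := by
                refine Finset.card_le_card fun y hy => ?_
                by_cases hyB : y ∈ B
                · exact Finset.mem_union.2 (Or.inr hyB)
                · exact Finset.mem_union.2 (Or.inl (by simp [hA', hy, hyB]))
            _ ≤ A'.card + B.card := Finset.card_union_le _ _
        have h2 : B.card ≤ 2 ^ s * q ^ (d - 1) := serr_hamming_ball_card s q (d-1) hq x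
        rw [Finset.card_insert_of_notMem hxC']
        calc A.card ≤ A'.card + B.card := h1
          _ ≤ 2 ^ s * q ^ (d - 1) * C'.card + 2 ^ s * q ^ (d - 1) :=
              Nat.add_le_add hC'card h2
          _ = 2 ^ s * q ^ (d - 1) * (C'.card + 1) := by ring


open Metric in
lemma serr_packing_lemma (R : ℕ) (ρ : ℝ) (hρ : 0 ≤ ρ) (T : Finset (EuclideanSpace ℝ (Fin R)))
    (hbound : ∀ v ∈ T, ‖v‖ ≤ ρ)
    (hsep : ∀ v ∈ T, ∀ w ∈ T, v ≠ w → 1 ≤ dist v w) :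
    (T.card : ℝ) ≤ (2 * ρ + 2) ^ R := by
  classical
  set u := volume (ball (0 : EuclideanSpace ℝ (Fin R)) 1) with hu
  have hu0 : u ≠ 0 := (measure_ball_pos _ _ one_pos).ne'
  have huT : u ≠ ⊤ := measure_ball_lt_top.ne
  have hdisj : (T : Set (EuclideanSpace ℝ (Fin R))).PairwiseDisjoint
      (fun v => ball v (1/2)) := by
    intro v hv w hw hvw
    refine Set.disjoint_left.2 fun z hzv hzw => ?_
    have hzv' : dist z v < 1/2 := hzv
    have hzw' : dist z w < 1/2 := hzw
    have : dist v w < 1 := by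
      calc dist v w ≤ dist v z + dist z w := dist_triangle _ _ _
        _ < 1/2 + 1/2 := by rw [dist_comm v z]; exact add_lt_add hzv' hzw'
        _ = 1 := by norm_num
    exact absurd (hsep v hv w hw hvw) (not_le.2 this)
  have hvol : ∀ v : EuclideanSpace ℝ (Fin R), volume (ball v (1/2))
      = ENNReal.ofReal ((1/2 : ℝ) ^ R) * u := by
    intro v
    rw [Measure.addHaar_ball_of_pos volume v (by norm_num : (0:ℝ) < 1/2),
      finrank_euclideanSpace_fin]
  have hsub : (⋃ v ∈ T, ball v (1/2)) ⊆ ball (0 : EuclideanSpace ℝ (Fin R)) (ρ + 1) := by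
    intro z hz
    simp only [Set.mem_iUnion] at hz
    obtain ⟨v, hv, hzv⟩ := hz
    rw [mem_ball, dist_zero_right] at *
    calc ‖z‖ ≤ ‖z - v‖ + ‖v‖ := by
          have := norm_add_le (z - v) v; simpa using this
      _ < 1/2 + ρ + 1/2 := by
          have : ‖z - v‖ < 1/2 := by rw [← dist_eq_norm]; exact mem_ball.1 hzv
          have hb := hbound v hv
          linarith
      _ = ρ + 1 := by ring
  have hmeas : (T.card : ℝ≥0∞) * (ENNReal.ofReal ((1/2 : ℝ) ^ R) * u)
      ≤ ENNReal.ofReal ((ρ + 1) ^ R) * u := by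
    calc (T.card : ℝ≥0∞) * (ENNReal.ofReal ((1/2 : ℝ) ^ R) * u)
        = ∑ v ∈ T, volume (ball v (1/2)) := by
          rw [Finset.sum_congr rfl fun v _ => hvol v, Finset.sum_const, nsmul_eq_mul]
      _ = volume (⋃ v ∈ T, ball v (1/2)) := by
          rw [measure_biUnion_finset hdisj fun v _ => measurableSet_ball]
      _ ≤ volume (ball (0 : EuclideanSpace ℝ (Fin R)) (ρ + 1)) := measure_mono hsub
      _ = ENNReal.ofReal ((ρ + 1) ^ R) * u := by
          rw [Measure.addHaar_ball_of_pos volume _ (by linarith : (0:ℝ) < ρ + 1),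
            finrank_euclideanSpace_fin]
  rw [← mul_assoc, ENNReal.mul_le_mul_iff_left hu0 huT] at hmeas
  have h2 : ENNReal.ofReal ((T.card : ℝ) * (1/2 : ℝ) ^ R) ≤ ENNReal.ofReal ((ρ + 1) ^ R) := by
    rwa [ENNReal.ofReal_mul (by positivity), ENNReal.ofReal_natCast]
  have h3 : (T.card : ℝ) * (1/2 : ℝ) ^ R ≤ (ρ + 1) ^ R :=
    (ENNReal.ofReal_le_ofReal_iff (by positivity)).1 h2
  have h4 : (2 * ρ + 2 : ℝ) ^ R = (ρ + 1) ^ R * (2:ℝ) ^ R := by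
    rw [← mul_pow]; ring_nf
  rw [h4]
  have h5 : (T.card : ℝ) = ((T.card : ℝ) * (1/2 : ℝ) ^ R) * 2 ^ R := by
    rw [mul_assoc, ← mul_pow]
    norm_num
  rw [h5]
  exact mul_le_mul_of_nonneg_right h3 (by positivity)


lemma serr_l2_pos {p : ℕ} {δ : Fin p → ℝ} (hδ : δ ≠ 0) : 0 < l2 p δ := by
  obtain ⟨j, hj⟩ := Function.ne_iff.1 hδ
  have hj' : δ j ≠ 0 := by simpa using hj
  unfold l2
  apply Real.sqrt_pos.2
  have h1 : 0 < δ j ^ 2 := lt_of_le_of_ne (sq_nonneg _) (Ne.symm (pow_ne_zero 2 hj'))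
  exact lt_of_lt_of_le h1 (Finset.single_le_sum (fun i _ => sq_nonneg (δ i)) (Finset.mem_univ j))


lemma serr_normn_le (n p : ℕ) (hn : 1 ≤ n) (X : Matrix (Fin n) (Fin p) ℝ) (δ : Fin p → ℝ) :
    normn n (X.mulVec δ) ≤ Real.sqrt (∑ i, ∑ j, X i j ^ 2) * l2 p δ := by
  unfold normn l2
  rw [← Real.sqrt_mul (by positivity)]
  apply Real.sqrt_le_sqrt
  calc (∑ i, X.mulVec δ i ^ 2) / n ≤ ∑ i, X.mulVec δ i ^ 2 := by
        apply div_le_self (by positivity) (by exact_mod_cast hn)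
    _ ≤ ∑ i, (∑ j, X i j ^ 2) * (∑ j, δ j ^ 2) := by
        refine Finset.sum_le_sum fun i _ => ?_
        have h : X.mulVec δ i = ∑ j, X i j * δ j := by
          simp [Matrix.mulVec, dotProduct]
        rw [h]
        exact Finset.sum_mul_sq_le_sq_mul_sq _ _ _
    _ = (∑ i, ∑ j, X i j ^ 2) * (∑ j, δ j ^ 2) := (Finset.sum_mul _ _ _).symm


lemma serr_theta_min_le (n p t : ℕ) (X : Matrix (Fin n) (Fin p) ℝ) {δ : Fin p → ℝ}
    (hδ : δ ≠ 0) (hsp : sparsity p δ ≤ t) :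
    thetaMinS n p X t * l2 p δ ≤ normn n (X.mulVec δ) := by
  have hl2 := serr_l2_pos hδ
  have hmem : normn n (X.mulVec δ) / l2 p δ ∈
      ((fun δ => normn n (X.mulVec δ) / l2 p δ) ''
        {δ : Fin p → ℝ | δ ≠ 0 ∧ sparsity p δ ≤ t}) := ⟨δ, ⟨hδ, hsp⟩, rfl⟩
  have hbdd : BddBelow ((fun δ => normn n (X.mulVec δ) / l2 p δ) ''
      {δ : Fin p → ℝ | δ ≠ 0 ∧ sparsity p δ ≤ t}) := by
    refine ⟨0, ?_⟩
    rintro y ⟨δ', -, rfl⟩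
    have h1 : 0 ≤ normn n (X.mulVec δ') := by unfold normn; positivity
    have h2 : 0 ≤ l2 p δ' := by unfold l2; positivity
    exact div_nonneg h1 h2
  have h := csInf_le hbdd hmem
  rw [thetaMinS]
  rw [le_div_iff₀ hl2] at h
  exact h


lemma serr_theta_max_ge (n p t : ℕ) (hn : 1 ≤ n) (X : Matrix (Fin n) (Fin p) ℝ)
    {δ : Fin p → ℝ} (hδ : δ ≠ 0) (hsp : sparsity p δ ≤ t) :
    normn n (X.mulVec δ) ≤ thetaMaxS n p X t * l2 p δ := by
  have hl2 := serr_l2_pos hδ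
  have hbdd : BddAbove ((fun δ => normn n (X.mulVec δ) / l2 p δ) ''
      {δ : Fin p → ℝ | δ ≠ 0 ∧ sparsity p δ ≤ t}) := by
    refine ⟨Real.sqrt (∑ i, ∑ j, X i j ^ 2), ?_⟩
    rintro y ⟨δ', ⟨hδ', -⟩, rfl⟩
    exact (div_le_iff₀ (serr_l2_pos hδ')).2 (serr_normn_le n p hn X δ')
  have h := le_csSup hbdd (⟨δ, ⟨hδ, hsp⟩, rfl⟩ :
    normn n (X.mulVec δ) / l2 p δ ∈ ((fun δ => normn n (X.mulVec δ) / l2 p δ) ''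
      {δ : Fin p → ℝ | δ ≠ 0 ∧ sparsity p δ ≤ t}))
  rw [thetaMaxS]
  rw [div_le_iff₀ hl2] at h
  exact h


lemma serr_rank_ge (n p t : ℕ) (htp : t ≤ p) (X : Matrix (Fin n) (Fin p) ℝ)
    (h : ∀ δ : Fin p → ℝ, δ ≠ 0 → sparsity p δ ≤ t → X.mulVec δ ≠ 0) : t ≤ X.rank := by
  classical
  let ext : (Fin t → ℝ) →ₗ[ℝ] (Fin p → ℝ) :=
    { toFun := fun a i => if hi : (i : ℕ) < t then a ⟨i, hi⟩ else 0
      map_add' := by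
        intro a b; funext i; by_cases hi : (i : ℕ) < t <;> simp [hi]
      map_smul' := by
        intro m a; funext i; by_cases hi : (i : ℕ) < t <;> simp [hi] }
  have hspar : ∀ a : Fin t → ℝ, sparsity p (ext a) ≤ t := by
    intro a
    have hsub : (Finset.univ.filter fun i : Fin p => ext a i ≠ 0) ⊆
        Finset.univ.image (Fin.castLE htp) := by
      intro i hi
      simp only [Finset.mem_filter] at hi
      have hi' : (i : ℕ) < t := by
        by_contra hc
        exact hi.2 (by simp only [ext, LinearMap.coe_mk, AddHom.coe_mk]; rw [dif_neg hc])
      exact Finset.mem_image.2 ⟨⟨i, hi'⟩, Finset.mem_univ _, by ext; simp⟩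
    calc sparsity p (ext a) ≤ (Finset.univ.image (Fin.castLE htp)).card :=
          Finset.card_le_card hsub
      _ ≤ (Finset.univ : Finset (Fin t)).card := Finset.card_image_le
      _ = t := by simp
  have hinj : Function.Injective (X.mulVecLin ∘ₗ ext) := by
    rw [injective_iff_map_eq_zero]
    intro a ha
    by_contra ha0
    have hext0 : ext a ≠ 0 := by
      obtain ⟨j, hj⟩ := Function.ne_iff.1 ha0
      intro h0
      apply hj
      have h1 := congrFun h0 (Fin.castLE htp j)
      simp only [ext, LinearMap.coe_mk, AddHom.coe_mk, Pi.zero_apply] at h1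
      have hjlt : ((Fin.castLE htp j : Fin p) : ℕ) < t := j.isLt
      rw [dif_pos hjlt] at h1
      simpa using h1
    exact h (ext a) hext0 (hspar a)
      (by simpa [Matrix.mulVecLin_apply] using ha)
  calc t = Module.finrank ℝ (Fin t → ℝ) := by
        simp [Module.finrank_fintype_fun_eq_card]
    _ = Module.finrank ℝ (LinearMap.range (X.mulVecLin ∘ₗ ext)) :=
        (LinearMap.finrank_range_of_inj hinj).symm
    _ ≤ Module.finrank ℝ (LinearMap.range X.mulVecLin) :=
        Submodule.finrank_mono (LinearMap.range_comp_le_range _ _)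
    _ = X.rank := rfl


lemma serr_construction (s q p : ℕ) (hs : 1 ≤ s) (hsqp : s * q ≤ p) :
    ∃ u : (Fin s → Fin q) → (Fin p → ℝ),
      (∀ x, u x ≠ 0) ∧
      (∀ x, sparsity p (u x) ≤ 2 * s) ∧
      (∀ x, l2 p (u x) = 1) ∧
      (∀ x y, sparsity p (u x - u y) ≤ 2 * s) ∧
      (∀ x y, l2 p (u x - u y) ^ 2 = 2 * (hammingDist x y : ℝ) / s) := by
  classical
  set ι : Fin s × Fin q → Fin p := fun z => Fin.castLE hsqp (finProdFinEquiv z) with hι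
  have hιinj : Function.Injective ι :=
    (Fin.castLE_injective hsqp).comp finProdFinEquiv.injective
  set S : (Fin s → Fin q) → Finset (Fin p) := fun x => Finset.univ.image fun j => ι (j, x j)
    with hS
  have hmemS : ∀ (x : Fin s → Fin q) (j : Fin s) (y : Fin q), ι (j, y) ∈ S x ↔ y = x j := by
    intro x j y
    constructor
    · intro hmem
      obtain ⟨j', -, hj'⟩ := Finset.mem_image.1 hmem
      have h2 := hιinj hj'
      rw [Prod.mk.injEq] at h2
      rw [← h2.2, h2.1]
    · rintro rfl
      exact Finset.mem_image.2 ⟨j, Finset.mem_univ _, rfl⟩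
  have hcardS : ∀ x, (S x).card = s := by
    intro x
    rw [hS]
    rw [Finset.card_image_of_injective _ (fun j j' h => by
      have := hιinj h; rw [Prod.mk.injEq] at this; exact this.1)]
    simp
  set c : ℝ := (Real.sqrt s)⁻¹ with hc
  have hs0 : (0:ℝ) < s := by exact_mod_cast hs
  have hcpos : 0 < c := by rw [hc]; positivity
  have hc2 : c ^ 2 = (s:ℝ)⁻¹ := by
    rw [hc, ← Real.sqrt_inv, Real.sq_sqrt (by positivity)]
  set u : (Fin s → Fin q) → (Fin p → ℝ) := fun x i => if i ∈ S x then c else 0 with hu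
  have hSdiff : ∀ x y : Fin s → Fin q,
      S x \ S y = Finset.image (fun j => ι (j, x j))
        (Finset.univ.filter fun j => x j ≠ y j) := by
    intro x y
    ext i
    simp only [Finset.mem_sdiff, Finset.mem_image, Finset.mem_filter, Finset.mem_univ, true_and]
    constructor
    · rintro ⟨hx, hnot⟩
      rw [hS] at hx
      obtain ⟨j, -, hj⟩ := Finset.mem_image.1 hx
      refine ⟨j, ?_, hj⟩
      intro heq
      apply hnot
      rw [← hj]
      exact (hmemS y j (x j)).2 heq
    · rintro ⟨j, hne, rfl⟩
      exact ⟨(hmemS x j (x j)).2 rfl, fun hmem => hne ((hmemS y j (x j)).1 hmem)⟩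
  have hcard_sdiff : ∀ x y, (S x \ S y).card = hammingDist x y := by
    intro x y
    rw [hSdiff]
    rw [Finset.card_image_of_injOn (fun j _ j' _ h => by
      have := hιinj h; rw [Prod.mk.injEq] at this; exact this.1)]
    rfl
  have hsum1 : ∀ x, ∑ i, (u x i) ^ 2 = 1 := by
    intro x
    have h : ∀ i, (u x i) ^ 2 = if i ∈ S x then (s:ℝ)⁻¹ else 0 := by
      intro i
      rw [hu]
      by_cases h : i ∈ S x <;> simp [h, hc2]
    rw [Finset.sum_congr rfl fun i _ => h i, Finset.sum_ite_mem, Finset.univ_inter,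
      Finset.sum_const, hcardS, nsmul_eq_mul]
    field_simp
  have hsum2 : ∀ x y, ∑ i, (u x i - u y i) ^ 2 = 2 * (hammingDist x y : ℝ) / s := by
    intro x y
    have hpt : ∀ i, (u x i - u y i) ^ 2
        = if i ∈ (S x \ S y) ∪ (S y \ S x) then (s:ℝ)⁻¹ else 0 := by
      intro i
      rw [hu]
      by_cases h1 : i ∈ S x <;> by_cases h2 : i ∈ S y <;>
        simp [h1, h2, Finset.mem_union, Finset.mem_sdiff, hc2, sub_zero, zero_sub, neg_sq]
    rw [Finset.sum_congr rfl fun i _ => hpt i, Finset.sum_ite_mem, Finset.univ_inter,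
      Finset.sum_const, nsmul_eq_mul,
      Finset.card_union_of_disjoint disjoint_sdiff_sdiff, Nat.cast_add,
      hcard_sdiff x y, hcard_sdiff y x, hammingDist_comm y x]
    push_cast
    field_simp
    ring
  refine ⟨u, ?_, ?_, ?_, ?_, ?_⟩
  · intro x h0
    have h1 : u x (ι (⟨0, hs⟩, x ⟨0, hs⟩)) = c := by
      rw [hu]
      simp only []
      rw [if_pos ((hmemS x _ _).2 rfl)]
    rw [h0] at h1
    simp at h1
    exact hcpos.ne' h1.symm
  · intro x
    unfold sparsity
    have hsub : (Finset.univ.filter fun i => u x i ≠ 0) ⊆ S x := by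
      intro i hi
      simp only [Finset.mem_filter] at hi
      by_contra h
      exact hi.2 (by rw [hu]; simp [h])
    calc (Finset.univ.filter fun i => u x i ≠ 0).card ≤ (S x).card := Finset.card_le_card hsub
      _ = s := hcardS x
      _ ≤ 2 * s := by omega
  · intro x
    unfold l2
    rw [hsum1]
    exact Real.sqrt_one
  · intro x y
    unfold sparsity
    have hsub : (Finset.univ.filter fun i => (u x - u y) i ≠ 0) ⊆ S x ∪ S y := by
      intro i hi
      simp only [Finset.mem_filter, Pi.sub_apply] at hi
      by_contra h
      simp only [Finset.mem_union, not_or] at h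
      apply hi.2
      rw [hu]
      simp [h.1, h.2]
    calc (Finset.univ.filter fun i => (u x - u y) i ≠ 0).card
        ≤ (S x ∪ S y).card := Finset.card_le_card hsub
      _ ≤ (S x).card + (S y).card := Finset.card_union_le _ _
      _ ≤ 2 * s := by rw [hcardS, hcardS]; omega
  · intro x y
    unfold l2
    rw [Real.sq_sqrt (by positivity)]
    simp only [Pi.sub_apply]
    exact hsum2 x y


end Aux

set_option maxHeartbeats 2000000 in
/-- Corollary 5: if the ratio of the maximal and minimal `2s`-sparse eigenvalues of `X`
is bounded by `b`, then `s log(ep/s) < c(b) · rank(X)` for a constant `c(b) > 0`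
depending only on `b`. -/
theorem sparse_eigenvalue_ratio_rank (b : ℝ) (hb : 0 < b) :
    ∃ c : ℝ, 0 < c ∧
      ∀ (n p s : ℕ), 1 ≤ n → 2 ≤ p → 1 ≤ s → 2 * s ≤ p →
      ∀ X : Matrix (Fin n) (Fin p) ℝ,
        0 < thetaMinS n p X (2 * s) →
        thetaMaxS n p X (2 * s) / thetaMinS n p X (2 * s) ≤ b →
        (s : ℝ) * Real.log (Real.exp 1 * p / s) < c * (X.rank : ℝ) := by
  have hlogb : 0 < Real.log (2 * b + 2) := Real.log_pos (by linarith)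
  refine ⟨9 * Real.log (2 * b + 2) + 7, by linarith, ?_⟩
  intro n p s hn hp hs hsp X hθmin hratio
  set θmin := thetaMinS n p X (2 * s) with hθm
  set θmax := thetaMaxS n p X (2 * s) with hθM
  have hθmax_le : θmax ≤ b * θmin := by
    rw [div_le_iff₀ hθmin] at hratio; linarith
  have hsp' : s ≤ p := by omega
  have hXinj : ∀ δ : Fin p → ℝ, δ ≠ 0 → sparsity p δ ≤ 2 * s → X.mulVec δ ≠ 0 := by
    intro δ hδ hsδ h0
    have h1 := serr_theta_min_le n p (2 * s) X hδ hsδ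
    rw [h0] at h1
    have h2 : normn n (0 : Fin n → ℝ) = 0 := by unfold normn; simp
    rw [h2] at h1
    have h3 := mul_pos hθmin (serr_l2_pos hδ)
    rw [← hθm] at h1
    linarith
  have hranks : s ≤ X.rank := serr_rank_ge n p s hsp' X
    (fun δ h1 h2 => hXinj δ h1 (by omega))
  have hR1 : (1 : ℝ) ≤ (X.rank : ℝ) := by exact_mod_cast le_trans hs hranks
  have hsR : (s : ℝ) ≤ (X.rank : ℝ) := by exact_mod_cast hranks
  have hs0 : (0 : ℝ) < s := by exact_mod_cast hs
  have hp0 : (0 : ℝ) < p := by exact_mod_cast (by omega : 0 < p)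
  set q := p / s with hq
  by_cases hq64 : q < 64
  · -- small case : p < 64 s, use rank ≥ s
    have hmod := Nat.div_add_mod p s
    have hmods : p % s < s := Nat.mod_lt _ (by omega)
    have hps : p < 64 * s := by
      have hmod' : s * q + p % s = p := Nat.div_add_mod p s
      have h1 : s * q ≤ s * 63 := Nat.mul_le_mul_left s (by omega)
      omega
    have hx0 : 0 < Real.exp 1 * p / s := by positivity
    have hlog6 : Real.log (Real.exp 1 * p / s) ≤ 6 := by
      rw [Real.log_le_iff_le_exp hx0]
      have h27 : (2.7 : ℝ) ≤ Real.exp 1 := by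
        have := Real.exp_one_gt_d9; linarith
      have h5 : (64 : ℝ) ≤ Real.exp 5 := by
        have h1 : (2.7 : ℝ) ^ (5 : ℕ) ≤ Real.exp 1 ^ (5 : ℕ) :=
          pow_le_pow_left₀ (by norm_num) h27 5
        rw [Real.exp_one_pow] at h1
        have h2 : (64 : ℝ) ≤ (2.7 : ℝ) ^ (5 : ℕ) := by norm_num
        have h3 : Real.exp ((5 : ℕ) : ℝ) = Real.exp 5 := by norm_num
        rw [h3] at h1
        linarith
      have hp64 : (p : ℝ) ≤ 64 * s := by exact_mod_cast hps.le
      have hstep : Real.exp 1 * p / s ≤ Real.exp 1 * 64 := by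
        rw [div_le_iff₀ hs0]
        calc Real.exp 1 * p ≤ Real.exp 1 * (64 * s) :=
              mul_le_mul_of_nonneg_left hp64 (Real.exp_pos 1).le
          _ = Real.exp 1 * 64 * s := by ring
      calc Real.exp 1 * p / s ≤ Real.exp 1 * 64 := hstep
        _ ≤ Real.exp 1 * Real.exp 5 := mul_le_mul_of_nonneg_left h5 (Real.exp_pos 1).le
        _ = Real.exp 6 := by rw [← Real.exp_add]; norm_num
    calc (s : ℝ) * Real.log (Real.exp 1 * p / s) ≤ s * 6 :=
          mul_le_mul_of_nonneg_left hlog6 hs0.le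
      _ ≤ 6 * X.rank := by linarith
      _ < (9 * Real.log (2 * b + 2) + 7) * X.rank := by nlinarith
  · -- large case
    push_neg at hq64
    have hq1 : 1 ≤ q := by omega
    have hsqp : s * q ≤ p := by
      calc s * q = q * s := mul_comm _ _
        _ ≤ p := Nat.div_mul_le_self p s
    set d := (s + 1) / 2 with hd
    have hd1 : 1 ≤ d := by omega
    have h2d : s ≤ 2 * d := by omega
    obtain ⟨C, -, hCpair, hCcard⟩ := serr_exists_code_aux s q d hq1 hd1 Finset.univ
    rw [Finset.card_univ] at hCcard
    have hcard_univ : Fintype.card (Fin s → Fin q) = q ^ s := by simp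
    rw [hcard_univ] at hCcard
    obtain ⟨u, hu0, huspar, hul2, hudspar, hudl2⟩ := serr_construction s q p hs hsqp
    -- geometry
    set toE : (Fin n → ℝ) ≃ₗ[ℝ] EuclideanSpace ℝ (Fin n) :=
      (WithLp.linearEquiv 2 ℝ (Fin n → ℝ)).symm with htoE
    have hnormE : ∀ v : Fin n → ℝ, ‖toE v‖ = Real.sqrt n * normn n v := by
      intro v
      rw [EuclideanSpace.norm_eq]
      unfold normn
      rw [← Real.sqrt_mul (by positivity)]
      congr 1
      have hn0 : (n : ℝ) ≠ 0 := by
        have : (0:ℝ) < n := by exact_mod_cast (by omega : 0 < n)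
        exact this.ne'
      rw [mul_div_cancel₀ _ hn0]
      congr 1; funext i
      have hh : toE v i = v i := rfl
      rw [hh, Real.norm_eq_abs, sq_abs]
    set VE : Submodule ℝ (EuclideanSpace ℝ (Fin n)) :=
      Submodule.map (toE : (Fin n → ℝ) →ₗ[ℝ] EuclideanSpace ℝ (Fin n))
        (LinearMap.range X.mulVecLin) with hVE
    have hfinrank : Module.finrank ℝ VE = X.rank := by
      rw [hVE, LinearEquiv.finrank_map_eq]; rfl
    have hna : (0 : ℝ) < Real.sqrt n := Real.sqrt_pos.2 (by exact_mod_cast (by omega : 0 < n))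
    set a := Real.sqrt n with ha
    set w : (Fin s → Fin q) → EuclideanSpace ℝ (Fin n) :=
      fun x => (a * θmin)⁻¹ • toE (X.mulVec (u x)) with hw
    have hwmem : ∀ x, w x ∈ VE := by
      intro x
      apply Submodule.smul_mem
      exact Submodule.mem_map_of_mem ⟨u x, rfl⟩
    have haθ : 0 < a * θmin := mul_pos hna hθmin
    have hwnorm : ∀ x, ‖w x‖ ≤ b := by
      intro x
      rw [hw]
      simp only []
      rw [norm_smul, Real.norm_eq_abs, abs_of_pos (inv_pos.2 haθ), hnormE]
      have h1 : normn n (X.mulVec (u x)) ≤ θmax := by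
        have h2 := serr_theta_max_ge n p (2 * s) hn X (hu0 x) (huspar x)
        rwa [hul2 x, mul_one, ← hθM] at h2
      calc (a * θmin)⁻¹ * (a * normn n (X.mulVec (u x)))
          ≤ (a * θmin)⁻¹ * (a * θmax) := by
            apply mul_le_mul_of_nonneg_left _ (inv_pos.2 haθ).le
            exact mul_le_mul_of_nonneg_left h1 hna.le
        _ = θmax / θmin := by field_simp
        _ ≤ b := by rw [div_le_iff₀ hθmin]; linarith
    have hwsep : ∀ x ∈ C, ∀ y ∈ C, x ≠ y → 1 ≤ dist (w x) (w y) := by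
      intro x hx y hy hxy
      have hdist := hCpair x hx y hy hxy
      have hδ0 : u x - u y ≠ 0 := by
        intro h0
        have h1 := hudl2 x y
        rw [h0] at h1
        have h2 : l2 p (0 : Fin p → ℝ) = 0 := by unfold l2; simp
        rw [h2] at h1
        have h3 : (0:ℝ) < 2 * (hammingDist x y : ℝ) / s := by
          have h4 : (0:ℝ) < (hammingDist x y : ℝ) := by
            exact_mod_cast lt_of_lt_of_le hd1 hdist
          positivity
        rw [← h1] at h3
        simp at h3
      have hl2ge : 1 ≤ l2 p (u x - u y) := by
        have hsq := hudl2 x y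
        have h1 : (1 : ℝ) ≤ 2 * (hammingDist x y : ℝ) / s := by
          rw [le_div_iff₀ hs0]
          have h5 : (s : ℝ) ≤ 2 * (d : ℝ) := by exact_mod_cast h2d
          have hdd : (d : ℝ) ≤ (hammingDist x y : ℝ) := by exact_mod_cast hdist
          linarith
        nlinarith [serr_l2_pos hδ0]
      have hsubeq : toE (X.mulVec (u x)) - toE (X.mulVec (u y))
          = toE (X.mulVec (u x - u y)) := by
        rw [Matrix.mulVec_sub, map_sub]
      rw [dist_eq_norm, hw]
      simp only []
      rw [← smul_sub, hsubeq, norm_smul, Real.norm_eq_abs, abs_of_pos (inv_pos.2 haθ), hnormE]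
      have h2 := serr_theta_min_le n p (2 * s) X hδ0 (hudspar x y)
      rw [← hθm] at h2
      calc (1 : ℝ) ≤ l2 p (u x - u y) := hl2ge
        _ = (a * θmin)⁻¹ * (a * (θmin * l2 p (u x - u y))) := by
            field_simp
        _ ≤ (a * θmin)⁻¹ * (a * normn n (X.mulVec (u x - u y))) := by
            apply mul_le_mul_of_nonneg_left _ (inv_pos.2 haθ).le
            exact mul_le_mul_of_nonneg_left h2 hna.le
    set P : (Fin s → Fin q) → EuclideanSpace ℝ (Fin (Module.finrank ℝ VE)) :=
      fun x => (stdOrthonormalBasis ℝ VE).repr ⟨w x, hwmem x⟩ with hP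
    have hPdist : ∀ x y, dist (P x) (P y) = dist (w x) (w y) := by
      intro x y
      rw [hP]
      simp only []
      rw [LinearIsometryEquiv.dist_map]
      exact Subtype.dist_eq _ _
    have hPnorm : ∀ x, ‖P x‖ = ‖w x‖ := by
      intro x
      rw [hP]
      simp only []
      rw [LinearIsometryEquiv.norm_map]
      rfl
    set T := C.image P with hT
    have hTcard : T.card = C.card := by
      apply Finset.card_image_of_injOn
      intro x hx y hy hPxy
      by_contra hxy
      have h1 := hwsep x hx y hy hxy
      rw [← hPdist, hPxy, dist_self] at h1
      linarith
    have hpack : (C.card : ℝ) ≤ (2 * b + 2) ^ X.rank := by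
      have h1 : (T.card : ℝ) ≤ (2 * b + 2) ^ (Module.finrank ℝ VE) := by
        apply serr_packing_lemma (Module.finrank ℝ VE) b hb.le T
        · intro v hv
          obtain ⟨x, hxC, rfl⟩ := Finset.mem_image.1 hv
          rw [hPnorm]
          exact hwnorm x
        · intro v hv v' hv' hne
          obtain ⟨x, hxC, rfl⟩ := Finset.mem_image.1 hv
          obtain ⟨y, hyC, rfl⟩ := Finset.mem_image.1 hv'
          rw [hPdist]
          have hxy : x ≠ y := fun h => hne (by rw [h])
          rw [← hPdist]
          rw [hPdist]
          exact (hPdist x y) ▸ hwsep x hxC y hyC hxy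
      rw [hTcard, hfinrank] at h1
      exact h1
    -- arithmetic
    have hM1 : 1 ≤ C.card := by
      rcases Nat.eq_zero_or_pos C.card with h0 | h1
      · rw [h0, Nat.mul_zero] at hCcard
        have h2 : 0 < q ^ s := pow_pos (by omega) s
        omega
      · exact h1
    set L := Real.log q with hL
    have hL0 : 0 < L := Real.log_pos (by exact_mod_cast (by omega : 1 < q))
    have hM0 : (0 : ℝ) < C.card := by exact_mod_cast hM1
    have key1 : (s : ℝ) * L ≤ (s : ℝ) * Real.log 2 + ((d - 1 : ℕ) : ℝ) * L
        + Real.log C.card := by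
      have hq0R : (0:ℝ) < q := by exact_mod_cast (by omega : 0 < q)
      have hcast : ((q : ℝ)) ^ s ≤ (2 : ℝ) ^ s * (q : ℝ) ^ (d - 1) * (C.card : ℝ) := by
        exact_mod_cast hCcard
      have h1 := Real.log_le_log (by positivity) hcast
      rw [Real.log_pow] at h1
      rw [Real.log_mul (by positivity) hM0.ne', Real.log_mul (by positivity) (by positivity),
        Real.log_pow, Real.log_pow] at h1
      exact h1
    have key2 : 6 * Real.log 2 ≤ L := by
      have h1 : Real.log ((2:ℝ) ^ (6:ℕ)) ≤ L := by
        apply Real.log_le_log (by norm_num)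
        have : (64 : ℝ) ≤ q := by exact_mod_cast hq64
        norm_num
        linarith
      rw [Real.log_pow] at h1
      push_cast at h1
      linarith
    have key3 : Real.log C.card ≤ (X.rank : ℝ) * Real.log (2 * b + 2) := by
      have h1 := Real.log_le_log hM0 hpack
      rw [Real.log_pow] at h1
      exact h1
    have hdd : 2 * ((d - 1 : ℕ) : ℝ) ≤ (s : ℝ) - 1 := by
      have h1 : 2 * (d - 1) ≤ s - 1 := by omega
      have h2 : ((2 * (d - 1) : ℕ) : ℝ) ≤ ((s - 1 : ℕ) : ℝ) := by exact_mod_cast h1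
      rw [Nat.cast_mul, Nat.cast_sub hs] at h2
      push_cast at h2 ⊢
      linarith
    have hD0 : (0 : ℝ) ≤ ((d - 1 : ℕ) : ℝ) := Nat.cast_nonneg _
    have h7 : 6 * ((s : ℝ) * Real.log 2) ≤ (s : ℝ) * L := by nlinarith [key2, hs0.le]
    have h8 : 2 * (((d - 1 : ℕ) : ℝ) * L) + L ≤ (s : ℝ) * L := by nlinarith [hdd, hL0.le]
    have key4 : (s : ℝ) * L ≤ 3 * Real.log C.card := by linarith
    have key5 : Real.log (Real.exp 1 * p / s) ≤ 3 * L := by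
      have hx0 : 0 < Real.exp 1 * p / s := by positivity
      have hq0 : (0 : ℝ) < q := by exact_mod_cast (by omega : 0 < q)
      have hq64' : (64 : ℝ) ≤ q := by exact_mod_cast hq64
      have hmod : s * q + p % s = p := Nat.div_add_mod p s
      have hmods : p % s < s := Nat.mod_lt _ (by omega)
      have h3 : p < s * q + s := by omega
      have hpq : (p : ℝ) < (s : ℝ) * ((q : ℝ) + 1) := by
        have h4 : (p : ℝ) < (s : ℝ) * q + s := by exact_mod_cast h3
        linarith [h4]
      have hxe : Real.exp 1 * p / s ≤ (q : ℝ) ^ (3:ℕ) := by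
        rw [div_le_iff₀ hs0]
        have he3 : Real.exp 1 ≤ 3 := by
          have := Real.exp_one_lt_d9; linarith
        have hq3 : 3 * ((q:ℝ) + 1) ≤ (q:ℝ) ^ (3:ℕ) := by
          nlinarith [hq64', sq_nonneg ((q:ℝ) - 64)]
        calc Real.exp 1 * p ≤ 3 * p :=
              mul_le_mul_of_nonneg_right he3 hp0.le
          _ ≤ 3 * ((s:ℝ) * ((q:ℝ) + 1)) := by nlinarith [hpq]
          _ = (s:ℝ) * (3 * ((q:ℝ) + 1)) := by ring
          _ ≤ (s:ℝ) * ((q:ℝ) ^ (3:ℕ)) := mul_le_mul_of_nonneg_left hq3 hs0.le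
          _ = (q:ℝ) ^ (3:ℕ) * s := by ring
      calc Real.log (Real.exp 1 * p / s) ≤ Real.log ((q : ℝ) ^ (3:ℕ)) :=
            Real.log_le_log hx0 hxe
        _ = 3 * L := by rw [Real.log_pow]; push_cast; ring
    calc (s : ℝ) * Real.log (Real.exp 1 * p / s) ≤ (s : ℝ) * (3 * L) :=
          mul_le_mul_of_nonneg_left key5 hs0.le
      _ = 3 * ((s : ℝ) * L) := by ring
      _ ≤ 9 * Real.log C.card := by linarith
      _ ≤ 9 * ((X.rank : ℝ) * Real.log (2 * b + 2)) := by nlinarith [key3]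
      _ < (9 * Real.log (2 * b + 2) + 7) * X.rank := by nlinarith [hR1, hlogb]
end
end

section
/- Let s ∈ {1,…,p}, c₀ > 0, and let the Slope weights be λ_j = Aσ√(log(2p/j)/n), j = 1,…,p, for some A, σ > 0. Set s₂ = ⌈s·log(2ep/s)/log 2⌉. If the SRE(s₂,c₀) condition holds, then the WRE(s,c₀) condition holds and ϑ(s,c₀) ≥ θ(s₂,c₀). -/
open MeasureTheory ProbabilityTheory Real Finset
open scoped ENNReal NNReal BigOperators Classical

noncomputable section

/-- The SRE constant `θ(s,c₀)`: infimum of `‖Xδ‖ₙ/‖δ‖₂` over the cone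
`{δ ≠ 0 : ‖δ‖₁ ≤ (1+c₀)√s ‖δ‖₂}`. -/
def thetaSRE (n p : ℕ) (X : Matrix (Fin n) (Fin p) ℝ) (s : ℕ) (c0 : ℝ) : ℝ :=
  sInf ((fun δ => normn n (X.mulVec δ) / l2 p δ) ''
    {δ : Fin p → ℝ | δ ≠ 0 ∧ l1 p δ ≤ (1 + c0) * Real.sqrt s * l2 p δ})

/-- The Slope weights `λⱼ = Aσ√(log(2p/j)/n)`, indexed by `j ∈ {1,…,p}`. -/
def slopeWeight (n p : ℕ) (A σ : ℝ) (j : ℕ) : ℝ :=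
  A * σ * Real.sqrt (Real.log (2 * p / j) / n)

/-- The sorted `ℓ₁` norm `‖u‖₊ = ∑ⱼ λⱼ u♯ⱼ` associated with weights `lam` (1-indexed). -/
def sortedL1 (p : ℕ) (lam : ℕ → ℝ) (u : Fin p → ℝ) : ℝ :=
  ∑ j : Fin p, lam ((j : ℕ) + 1) * sharp p u j

/-- `b` is a Slope solution with design `X`, weights `lam` and data `y`. -/
def IsSlopeSol (n p : ℕ) (X : Matrix (Fin n) (Fin p) ℝ) (lam : ℕ → ℝ)
    (y : Fin n → ℝ) (b : Fin p → ℝ) : Prop :=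
  ∀ β : Fin p → ℝ,
    normn n (X.mulVec b - y) ^ 2 + 2 * sortedL1 p lam b ≤
      normn n (X.mulVec β - y) ^ 2 + 2 * sortedL1 p lam β

/-- The WRE constant `ϑ(s,c₀)`: infimum of `‖Xδ‖ₙ/‖δ‖₂` over the cone
`{δ ≠ 0 : ‖δ‖₊ ≤ (1+c₀)‖δ‖₂ (∑_{j=1}^s λⱼ²)^{1/2}}`. -/
def thetaWRE (n p : ℕ) (X : Matrix (Fin n) (Fin p) ℝ) (lam : ℕ → ℝ) (s : ℕ) (c0 : ℝ) : ℝ :=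
  sInf ((fun δ => normn n (X.mulVec δ) / l2 p δ) ''
    {δ : Fin p → ℝ | δ ≠ 0 ∧
      sortedL1 p lam δ ≤ (1 + c0) * l2 p δ * Real.sqrt (∑ j ∈ Finset.Icc 1 s, lam j ^ 2)})

/-!
Since the Slope weights decrease, `λ_p ‖δ‖₁ ≤ ‖δ‖_*`, and the bound `s! ≥ (s/e)^s` gives
`∑_{j ≤ s} log (2p/j) ≤ s log (2ep/s) ≤ s₂ log 2`, i.e. `∑_{j ≤ s} λ_j² ≤ s₂ λ_p²`.
Together these put the WRE(s,c₀) cone inside the SRE(s₂,c₀) cone, and an infimum over a smaller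
nonempty set is larger.
-/

open scoped Nat

def sreCone (p s : ℕ) (c0 : ℝ) : Set (Fin p → ℝ) :=
  {δ | δ ≠ 0 ∧ l1 p δ ≤ (1 + c0) * √s * l2 p δ}

def wreCone (p : ℕ) (lam : ℕ → ℝ) (s : ℕ) (c0 : ℝ) : Set (Fin p → ℝ) :=
  {δ | δ ≠ 0 ∧ sortedL1 p lam δ ≤ (1 + c0) * l2 p δ * √(∑ j ∈ Icc 1 s, lam j ^ 2)}

theorem thetaSRE_le_thetaWRE {n p s t : ℕ} (X : Matrix (Fin n) (Fin p) ℝ) {lam : ℕ → ℝ}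
    {c0 : ℝ} (hne : (wreCone p lam s c0).Nonempty) (hsub : wreCone p lam s c0 ⊆ sreCone p t c0) :
    thetaSRE n p X t c0 ≤ thetaWRE n p X lam s c0 :=
  csInf_le_csInf ⟨0, by rintro _ ⟨δ, _, rfl⟩; exact div_nonneg (sqrt_nonneg _) (sqrt_nonneg _)⟩
    (hne.image _) (Set.image_mono hsub)

section Norms

variable {p : ℕ} {lam : ℕ → ℝ} {c : ℝ}

theorem sum_sharp (u : Fin p → ℝ) : ∑ j, sharp p u j = l1 p u :=
  Equiv.sum_comp (Tuple.sort fun i => -|u i|) (fun i => |u i|)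

theorem sortedL1_le_mul_l1 (h : ∀ j : Fin p, lam (j + 1) ≤ c) (u : Fin p → ℝ) :
    sortedL1 p lam u ≤ c * l1 p u := by
  rw [← sum_sharp, mul_sum]
  exact sum_le_sum fun j _ => mul_le_mul_of_nonneg_right (h j) (abs_nonneg _)

theorem mul_l1_le_sortedL1 (h : ∀ j : Fin p, c ≤ lam (j + 1)) (u : Fin p → ℝ) :
    c * l1 p u ≤ sortedL1 p lam u := by
  rw [← sum_sharp, mul_sum]
  exact sum_le_sum fun j _ => mul_le_mul_of_nonneg_right (h j) (abs_nonneg _)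

theorem l1_single (i : Fin p) : l1 p (Pi.single i 1) = 1 := by
  simp [l1, Pi.single_apply, apply_ite]

theorem l2_single (i : Fin p) : l2 p (Pi.single i 1) = 1 := by
  simp [l2, Pi.single_apply]

end Norms

theorem single_mem_wreCone {p s : ℕ} {lam : ℕ → ℝ} {c0 : ℝ} (hs : 1 ≤ s) (hc0 : 0 ≤ c0)
    (hlam : ∀ j : Fin p, lam (j + 1) ≤ lam 1) (i : Fin p) :
    Pi.single i 1 ∈ wreCone p lam s c0 := by
  refine ⟨by simp, ?_⟩
  have hfirst : lam 1 ≤ √(∑ j ∈ Icc 1 s, lam j ^ 2) :=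
    (le_abs_self _).trans <| abs_le_sqrt <|
      single_le_sum (f := fun j => lam j ^ 2) (fun j _ => sq_nonneg _) (mem_Icc.2 ⟨le_rfl, hs⟩)
  calc sortedL1 p lam (Pi.single i 1) ≤ lam 1 * l1 p (Pi.single i 1) := sortedL1_le_mul_l1 hlam _
    _ = lam 1 := by rw [l1_single, mul_one]
    _ ≤ √(∑ j ∈ Icc 1 s, lam j ^ 2) := hfirst
    _ ≤ (1 + c0) * l2 p (Pi.single i 1) * √(∑ j ∈ Icc 1 s, lam j ^ 2) := by
      rw [l2_single, mul_one]
      exact le_mul_of_one_le_left (sqrt_nonneg _) (by linarith)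

theorem wreCone_subset_sreCone {p s t : ℕ} {lam : ℕ → ℝ} {c0 μ : ℝ} (hc0 : 0 ≤ 1 + c0)
    (hμ : 0 < μ) (hlow : ∀ j : Fin p, μ ≤ lam (j + 1))
    (hsum : ∑ j ∈ Icc 1 s, lam j ^ 2 ≤ μ ^ 2 * t) :
    wreCone p lam s c0 ⊆ sreCone p t c0 := by
  rintro δ ⟨hδ, hcone⟩
  refine ⟨hδ, le_of_mul_le_mul_left ?_ hμ⟩
  have hsqrt : √(∑ j ∈ Icc 1 s, lam j ^ 2) ≤ μ * √t := by
    rw [← sqrt_sq hμ.le, ← sqrt_mul (sq_nonneg _)]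
    exact sqrt_le_sqrt hsum
  calc μ * l1 p δ ≤ sortedL1 p lam δ := mul_l1_le_sortedL1 hlow δ
    _ ≤ (1 + c0) * l2 p δ * √(∑ j ∈ Icc 1 s, lam j ^ 2) := hcone
    _ ≤ (1 + c0) * l2 p δ * (μ * √t) :=
      mul_le_mul_of_nonneg_left hsqrt (mul_nonneg hc0 (sqrt_nonneg _))
    _ = μ * ((1 + c0) * √t * l2 p δ) := by ring

theorem log_factorial_ge (s : ℕ) : s * log s - s ≤ log (s ! : ℝ) := by
  rcases s.eq_zero_or_pos with rfl | hs
  · simp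
  have h := log_le_log (by positivity) (pow_div_factorial_le_exp (s : ℝ) s.cast_nonneg s)
  rw [log_div (by positivity) (by positivity), log_pow, log_exp] at h
  linarith

theorem sum_log_Icc_eq_log_factorial (s : ℕ) : ∑ j ∈ Icc 1 s, log (j : ℝ) = log (s ! : ℝ) := by
  rw [← Ico_add_one_right_eq_Icc, ← prod_Ico_id_eq_factorial, Nat.cast_prod, log_prod]
  intro j hj
  have : 1 ≤ j := (mem_Ico.1 hj).1
  positivity

theorem sum_log_div_le {a : ℝ} (ha : 0 < a) (s : ℕ) :
    ∑ j ∈ Icc 1 s, log (a / j) ≤ s * log (exp 1 * a / s) := by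
  rcases s.eq_zero_or_pos with rfl | hs
  · simp
  have hsplit : ∑ j ∈ Icc 1 s, log (a / j) = s * log a - log (s ! : ℝ) := by
    have hj : ∀ j ∈ Icc 1 s, (j : ℝ) ≠ 0 := fun j hj => by
      have : 1 ≤ j := (mem_Icc.1 hj).1
      positivity
    rw [sum_congr rfl fun j hj' => log_div ha.ne' (hj j hj'), sum_sub_distrib, sum_const,
      Nat.card_Icc, Nat.add_sub_cancel, nsmul_eq_mul, sum_log_Icc_eq_log_factorial]
  rw [hsplit, log_div (by positivity) (by positivity), log_mul (exp_ne_zero 1) ha.ne', log_exp]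
  linarith [log_factorial_ge s]

section SlopeWeight

variable {n p : ℕ} {A σ : ℝ}

theorem slopeWeight_antitoneOn (hp : 0 < p) (hAσ : 0 ≤ A * σ) :
    AntitoneOn (slopeWeight n p A σ) (Set.Ici 1) := by
  intro i hi j hj hij
  have hi : (1 : ℝ) ≤ i := by exact_mod_cast hi
  have hij : (i : ℝ) ≤ j := by exact_mod_cast hij
  unfold slopeWeight
  gcongr
  exact div_pos (by positivity) (by linarith)

theorem slopeWeight_self (hp : 0 < p) : slopeWeight n p A σ p = A * σ * √(log 2 / n) := by
  rw [slopeWeight, mul_div_cancel_right₀ _ (by exact_mod_cast hp.ne')]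

theorem slopeWeight_self_pos (hn : 0 < n) (hp : 0 < p) (hA : 0 < A) (hσ : 0 < σ) :
    0 < slopeWeight n p A σ p := by
  rw [slopeWeight_self hp]
  have := log_pos one_lt_two
  positivity

theorem sum_sq_slopeWeight_le {s : ℕ} (hp : 0 < p) (hsp : s ≤ p) :
    ∑ j ∈ Icc 1 s, slopeWeight n p A σ j ^ 2 ≤
      (A * σ) ^ 2 * (s * log (2 * exp 1 * p / s) / n) := by
  have hterm : ∀ j ∈ Icc 1 s, slopeWeight n p A σ j ^ 2 = (A * σ) ^ 2 * (log (2 * p / j) / n) := by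
    intro j hj
    have hj1 : (1 : ℝ) ≤ j := by exact_mod_cast (mem_Icc.1 hj).1
    have hjp : (j : ℝ) ≤ p := by exact_mod_cast (mem_Icc.1 hj).2.trans hsp
    have : 0 ≤ log (2 * p / j) := log_nonneg <| by rw [le_div_iff₀ (by linarith)]; linarith
    rw [slopeWeight, mul_pow, sq_sqrt (by positivity)]
  rw [sum_congr rfl hterm, ← mul_sum, ← sum_div, show 2 * exp 1 * p = exp 1 * (2 * p) by ring]
  gcongr
  exact sum_log_div_le (by positivity) s

theorem sum_sq_slopeWeight_le_mul_ceil {s : ℕ} (hp : 0 < p) (hsp : s ≤ p) :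
    ∑ j ∈ Icc 1 s, slopeWeight n p A σ j ^ 2 ≤
      slopeWeight n p A σ p ^ 2 * ⌈(s : ℝ) * log (2 * exp 1 * p / s) / log 2⌉₊ := by
  have hlog2 := log_pos one_lt_two
  have hceil : (s : ℝ) * log (2 * exp 1 * p / s) ≤
      ⌈(s : ℝ) * log (2 * exp 1 * p / s) / log 2⌉₊ * log 2 :=
    (div_le_iff₀ hlog2).1 (Nat.le_ceil _)
  calc ∑ j ∈ Icc 1 s, slopeWeight n p A σ j ^ 2
      ≤ (A * σ) ^ 2 * (s * log (2 * exp 1 * p / s) / n) := sum_sq_slopeWeight_le hp hsp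
    _ ≤ (A * σ) ^ 2 * (⌈(s : ℝ) * log (2 * exp 1 * p / s) / log 2⌉₊ * log 2 / n) := by
      gcongr
    _ = _ := by
      rw [slopeWeight_self hp, mul_pow, mul_pow, sq_sqrt (by positivity)]
      ring

end SlopeWeight

theorem sre_implies_wre_general
    {n p : ℕ} (hn : 0 < n) (hp : 0 < p)
    (X : Matrix (Fin n) (Fin p) ℝ)
    (s : ℕ) (hs1 : 1 ≤ s) (hsp : s ≤ p) (c0 : ℝ) (hc0 : 0 < c0)
    (A σ : ℝ) (hA : 0 < A) (hσ : 0 < σ)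
    (s2 : ℕ) (hs2 : s2 = ⌈(s : ℝ) * Real.log (2 * Real.exp 1 * p / s) / Real.log 2⌉₊)
    (hSRE : 0 < thetaSRE n p X s2 c0) :
    0 < thetaWRE n p X (slopeWeight n p A σ) s c0 ∧
      thetaSRE n p X s2 c0 ≤ thetaWRE n p X (slopeWeight n p A σ) s c0 := by
  have hanti := slopeWeight_antitoneOn (n := n) hp (mul_pos hA hσ).le
  have hle_first : ∀ j : Fin p, slopeWeight n p A σ (j + 1) ≤ slopeWeight n p A σ 1 :=
    fun j => hanti (Set.mem_Ici.2 le_rfl) (Set.mem_Ici.2 (by omega)) (by omega)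
  have hge_last : ∀ j : Fin p, slopeWeight n p A σ p ≤ slopeWeight n p A σ (j + 1) :=
    fun j => hanti (Set.mem_Ici.2 (by omega)) (Set.mem_Ici.2 hp) (by omega)
  have hsub : wreCone p (slopeWeight n p A σ) s c0 ⊆ sreCone p s2 c0 :=
    wreCone_subset_sreCone (by linarith) (slopeWeight_self_pos hn hp hA hσ) hge_last
      (hs2 ▸ sum_sq_slopeWeight_le_mul_ceil hp hsp)
  have hle := thetaSRE_le_thetaWRE X ⟨_, single_mem_wreCone hs1 hc0.le hle_first ⟨0, hp⟩⟩ hsub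
  exact ⟨hSRE.trans_le hle, hle⟩

/-- Proposition 6: with the Slope weights `λⱼ = Aσ√(log(2p/j)/n)` and
`s₂ = ⌈s log(2ep/s)/log 2⌉`, the condition `SRE(s₂,c₀)` implies `WRE(s,c₀)` and
`ϑ(s,c₀) ≥ θ(s₂,c₀)`. -/
theorem sre_implies_wre
    {n p : ℕ} (hn : 0 < n) (hp : 0 < p)
    (X : Matrix (Fin n) (Fin p) ℝ)
    (s : ℕ) (hs1 : 1 ≤ s) (hsp : s ≤ p) (c0 : ℝ) (hc0 : 0 < c0)
    (A σ : ℝ) (hA : 0 < A) (hσ : 0 < σ)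
    (s2 : ℕ) (hs2 : s2 = ⌈(s : ℝ) * Real.log (2 * Real.exp 1 * p / s) / Real.log 2⌉₊)
    (hcol : ∀ j, normn n (X.mulVec (Pi.single j 1)) ≤ 1)
    (hSRE : 0 < thetaSRE n p X s2 c0) :
    0 < thetaWRE n p X (slopeWeight n p A σ) s c0 ∧
      thetaSRE n p X s2 c0 ≤ thetaWRE n p X (slopeWeight n p A σ) s c0 :=
  sre_implies_wre_general hn hp X s hs1 hsp c0 hc0 A σ hA hσ s2 hs2 hSRE
end
end

section
/- Let λ₁ ≥ λ₂ ≥ ⋯ ≥ λ_p ≥ 0, s ∈ {1,…,p} and τ ∈ [0,1]. For any β, β̂ ∈ ℝᵖ with ‖β‖₀ ≤ s, setting u = β̂ − β, one has τ‖u‖_* + ‖β‖_* − ‖β̂‖_* ≤ (1+τ)·(∑_{j=1}^s λ_j²)^{1/2}·‖u‖₂ − (1−τ)·∑_{j=s+1}^p λ_j u_j^♯, where (u₁^♯,…,u_p^♯) is a non-increasing rearrangement of (|u₁|,…,|u_p|). In particular, if λ₁ = ⋯ = λ_p = λ > 0 then τλ‖u‖₁ + λ‖β‖₁ − λ‖β̂‖₁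 ≤ (1+τ)λ√s‖u‖₂ − (1−τ)λ∑_{j=s+1}^p u_j^♯. -/
open MeasureTheory ProbabilityTheory Real Finset
open scoped ENNReal NNReal BigOperators Classical

noncomputable section

/-!
Choose a permutation `ρ` listing `|β|` in decreasing order and, among the last `p - s`
positions (where `β ∘ ρ` vanishes), `|u|` in decreasing order. The rearrangement inequality gives
`‖β̂‖_* ≥ ∑ⱼ λⱼ |β̂_{ρ j}|` while `‖β‖_* = ∑ⱼ λⱼ |β_{ρ j}|`, so by the triangle inequality
`‖β‖_* - ‖β̂‖_* ≤ ∑_{j ≤ s} λⱼ |u_{ρ j}| - ∑_{j > s} λⱼ |u_{ρ j}|`. Cauchy–Schwarz bounds the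
first sum by `(∑_{j ≤ s} λⱼ²)^{1/2} ‖u‖₂`, and `|u_{ρ j}| ≥ u♯ⱼ` for `j > s` because only the
coordinates at earlier positions can exceed `|u_{ρ j}|`. Splitting `τ ‖u‖_*` the same way
finishes the proof; constant weights give the `ℓ₁` case.
-/

section
variable {p : ℕ}

lemma sharp_nonneg (u : Fin p → ℝ) (j : Fin p) : 0 ≤ sharp p u j := abs_nonneg _

lemma sharp_antitone (u : Fin p → ℝ) : Antitone (sharp p u) := fun _ _ hjk =>
  neg_le_neg_iff.mp (Tuple.monotone_sort (fun i => -|u i|) hjk)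

lemma sharp_eq_of_antitone {u : Fin p → ℝ} {ρ : Equiv.Perm (Fin p)}
    (h : Antitone fun j => |u (ρ j)|) (j : Fin p) : sharp p u j = |u (ρ j)| := by
  have hsort := (Tuple.comp_sort_eq_comp_iff_monotone (f := fun i => -|u i|) (σ := ρ)).2
    fun _ _ hab => neg_le_neg (h hab)
  exact (neg_inj.mp (congrFun hsort j)).symm

lemma sharp_le_of_card_lt_le (u : Fin p → ℝ) {c : ℝ} {j : Fin p}
    (h : #{i | c < |u i|} ≤ j) : sharp p u j ≤ c := by
  by_contra! hc
  have hmaps : Set.MapsTo (Tuple.sort fun i => -|u i|) (Iic j) ({i | c < |u i|} : Finset _) :=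
    fun m hm => mem_filter.2 ⟨mem_univ _, hc.trans_le (sharp_antitone u (mem_Iic.mp hm))⟩
  have := card_le_card_of_injOn _ hmaps (Equiv.injective _).injOn
  rw [Fin.card_Iic] at this
  omega

lemma sharp_eq_zero_of_sparsity_le {u : Fin p → ℝ} {s : ℕ} (hu : sparsity p u ≤ s) {j : Fin p}
    (hj : s ≤ j) : sharp p u j = 0 :=
  (sharp_le_of_card_lt_le u (by simpa [sparsity, abs_pos] using hu.trans hj)).antisymm
    (sharp_nonneg u j)

lemma sum_mul_abs_comp_perm_le_sortedL1 {lam : ℕ → ℝ}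
    (hmono : ∀ j k : ℕ, 1 ≤ j → j ≤ k → k ≤ p → lam k ≤ lam j) (u : Fin p → ℝ)
    (ρ : Equiv.Perm (Fin p)) :
    ∑ j : Fin p, lam (j + 1) * |u (ρ j)| ≤ sortedL1 p lam u := by
  have hlam : Antitone fun j : Fin p => lam (j + 1) := fun j k hjk =>
    hmono _ _ (by omega) (by simpa using hjk) k.isLt
  have := (hlam.monovary (sharp_antitone u)).sum_smul_comp_perm_le_sum_smul
    (σ := ρ.trans (Tuple.sort fun i => -|u i|).symm)
  simpa [sharp, sortedL1] using this

lemma sum_head_mul_abs_comp_perm_le (lam : ℕ → ℝ) (s : ℕ) (u : Fin p → ℝ)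
    (ρ : Equiv.Perm (Fin p)) :
    ∑ j ∈ univ.filter (fun j : Fin p => (j : ℕ) < s), lam (j + 1) * |u (ρ j)| ≤
      √(∑ j ∈ Icc 1 s, lam j ^ 2) * l2 p u := by
  have hl2 : l2 p u = √(∑ j, |u (ρ j)| ^ 2) := by
    simp only [l2, sq_abs]
    rw [Equiv.sum_comp ρ (fun i => u i ^ 2)]
  rw [hl2]
  refine (Real.sum_mul_le_sqrt_mul_sqrt _ _ _).trans
    (mul_le_mul (Real.sqrt_le_sqrt ?_) (Real.sqrt_le_sqrt ?_) (sqrt_nonneg _) (sqrt_nonneg _))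
  · rw [← sum_image (f := fun k => lam k ^ 2) fun a _ b _ h => by simpa [Fin.ext_iff] using h]
    refine sum_le_sum_of_subset_of_nonneg (fun k hk => ?_) fun _ _ _ => sq_nonneg _
    simp only [mem_image, mem_filter, mem_univ, true_and, mem_Icc] at hk ⊢
    omega
  · exact sum_le_sum_of_subset_of_nonneg (filter_subset _ _) fun _ _ _ => sq_nonneg _

lemma sortedL1_eq_head_add_tail (lam : ℕ → ℝ) (s : ℕ) (u : Fin p → ℝ) :
    sortedL1 p lam u =
      ∑ j ∈ univ.filter (fun j : Fin p => (j : ℕ) < s), lam (j + 1) * sharp p u j +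
        ∑ j ∈ univ.filter (fun j : Fin p => s ≤ (j : ℕ)), lam (j + 1) * sharp p u j := by
  simp only [sortedL1, ← not_lt]
  exact (sum_filter_add_sum_filter_not _ _ _).symm

lemma exists_perm_sharp_eq_and_tail_le (β u : Fin p → ℝ) {s : ℕ} (hβ : sparsity p β ≤ s) :
    ∃ ρ : Equiv.Perm (Fin p), (∀ j, sharp p β j = |β (ρ j)|) ∧
      ∀ j : Fin p, s ≤ (j : ℕ) → β (ρ j) = 0 ∧ sharp p u j ≤ |u (ρ j)| := by
  set ρ := Tuple.sort fun i => toLex (-|β i|, -|u i|)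
  have hρ : Monotone fun j => toLex (-|β (ρ j)|, -|u (ρ j)|) :=
    Tuple.monotone_sort fun i => toLex (-|β i|, -|u i|)
  have hβρ : ∀ j, sharp p β j = |β (ρ j)| :=
    sharp_eq_of_antitone fun _ _ hjk => neg_le_neg_iff.mp (Prod.Lex.monotone_fst _ _ (hρ hjk))
  have hzero : ∀ j : Fin p, s ≤ (j : ℕ) → β (ρ j) = 0 := fun j hj => by
    simpa [hβρ] using sharp_eq_zero_of_sparsity_le hβ hj
  refine ⟨ρ, hβρ, fun j hj => ⟨hzero j hj, sharp_le_of_card_lt_le u ?_⟩⟩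
  have hmaps : Set.MapsTo ρ.symm ({i | |u (ρ j)| < |u i|} : Finset _) (Iio j) := fun i hi => by
    simp only [coe_filter, mem_univ, true_and, Set.mem_ofPred_eq, coe_Iio, Set.mem_Iio] at hi ⊢
    by_contra! hji
    have hi0 : β i = 0 := by simpa using hzero _ (hj.trans (Fin.le_def.1 hji))
    have := hρ hji
    simp only [hzero j hj, hi0, ρ.apply_symm_apply, abs_zero, neg_zero, Prod.Lex.le_iff,
      ofLex_toLex, lt_self_iff_false, neg_le_neg_iff, true_and, false_or] at this
    exact this.not_gt hi
  simpa using card_le_card_of_injOn _ hmaps ρ.symm.injective.injOn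

theorem sortedL1_sub_sortedL1_le {lam : ℕ → ℝ} (hnonneg : ∀ j, 0 ≤ lam j)
    (hmono : ∀ j k : ℕ, 1 ≤ j → j ≤ k → k ≤ p → lam k ≤ lam j) {s : ℕ} {β βhat : Fin p → ℝ}
    (hβ : sparsity p β ≤ s) :
    sortedL1 p lam β - sortedL1 p lam βhat ≤
      √(∑ j ∈ Icc 1 s, lam j ^ 2) * l2 p (βhat - β) -
        ∑ j ∈ univ.filter (fun j : Fin p => s ≤ (j : ℕ)), lam (j + 1) * sharp p (βhat - β) j := by
  set u := βhat - β
  obtain ⟨ρ, hβρ, htail⟩ := exists_perm_sharp_eq_and_tail_le β u hβ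
  have head_le : ∀ j : Fin p, lam (j + 1) * |β (ρ j)| - lam (j + 1) * |βhat (ρ j)| ≤
      lam (j + 1) * |u (ρ j)| := fun j => by
    rw [← mul_sub]
    exact mul_le_mul_of_nonneg_left ((abs_sub_abs_le_abs_sub _ _).trans_eq (abs_sub_comm _ _))
      (hnonneg _)
  have tail_le : ∀ j : Fin p, s ≤ (j : ℕ) → lam (j + 1) * |β (ρ j)| - lam (j + 1) * |βhat (ρ j)| ≤
      -(lam (j + 1) * sharp p u j) := fun j hj => by
    have hu : βhat (ρ j) = u (ρ j) := by simp [u, (htail j hj).1]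
    rw [(htail j hj).1, hu, abs_zero, mul_zero, zero_sub, neg_le_neg_iff]
    exact mul_le_mul_of_nonneg_left (htail j hj).2 (hnonneg _)
  calc sortedL1 p lam β - sortedL1 p lam βhat
      ≤ ∑ j : Fin p, (lam (j + 1) * |β (ρ j)| - lam (j + 1) * |βhat (ρ j)|) := by
        rw [sum_sub_distrib, sortedL1]
        simp only [hβρ]
        linarith [sum_mul_abs_comp_perm_le_sortedL1 hmono βhat ρ]
    _ = ∑ j ∈ univ.filter (fun j : Fin p => (j : ℕ) < s),
            (lam (j + 1) * |β (ρ j)| - lam (j + 1) * |βhat (ρ j)|) +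
          ∑ j ∈ univ.filter (fun j : Fin p => s ≤ (j : ℕ)),
            (lam (j + 1) * |β (ρ j)| - lam (j + 1) * |βhat (ρ j)|) := by
        simp only [← not_lt]
        exact (sum_filter_add_sum_filter_not _ _ _).symm
    _ ≤ ∑ j ∈ univ.filter (fun j : Fin p => (j : ℕ) < s), lam (j + 1) * |u (ρ j)| +
          ∑ j ∈ univ.filter (fun j : Fin p => s ≤ (j : ℕ)), -(lam (j + 1) * sharp p u j) :=
        add_le_add (sum_le_sum fun j _ => head_le j)
          (sum_le_sum fun j hj => tail_le j (mem_filter.1 hj).2)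
    _ ≤ _ := by
        rw [sum_neg_distrib, ← sub_eq_add_neg]
        gcongr
        exact sum_head_mul_abs_comp_perm_le lam s u ρ

theorem mul_sortedL1_sub_add_sortedL1_sub_sortedL1_le {lam : ℕ → ℝ} (hnonneg : ∀ j, 0 ≤ lam j)
    (hmono : ∀ j k : ℕ, 1 ≤ j → j ≤ k → k ≤ p → lam k ≤ lam j) {s : ℕ} {τ : ℝ} (hτ : 0 ≤ τ)
    {β βhat : Fin p → ℝ} (hβ : sparsity p β ≤ s) :
    τ * sortedL1 p lam (βhat - β) + sortedL1 p lam β - sortedL1 p lam βhat ≤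
      (1 + τ) * √(∑ j ∈ Icc 1 s, lam j ^ 2) * l2 p (βhat - β) -
        (1 - τ) * ∑ j ∈ univ.filter (fun j : Fin p => s ≤ (j : ℕ)),
          lam (j + 1) * sharp p (βhat - β) j := by
  have hhead : ∑ j ∈ univ.filter (fun j : Fin p => (j : ℕ) < s),
      lam (j + 1) * sharp p (βhat - β) j ≤ √(∑ j ∈ Icc 1 s, lam j ^ 2) * l2 p (βhat - β) :=
    sum_head_mul_abs_comp_perm_le lam s (βhat - β) _
  rw [sortedL1_eq_head_add_tail lam s]
  linarith [mul_le_mul_of_nonneg_left hhead hτ,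
    sortedL1_sub_sortedL1_le hnonneg hmono (βhat := βhat) hβ]

lemma sortedL1_const (c : ℝ) (u : Fin p → ℝ) : sortedL1 p (fun _ => c) u = c * l1 p u := by
  rw [sortedL1, l1, mul_sum]
  exact Equiv.sum_comp (Tuple.sort fun i => -|u i|) (fun i => c * |u i|)

end

theorem sorted_l1_algebra_general
    {p : ℕ}
    (lam : ℕ → ℝ)
    (hnonneg : ∀ j, 0 ≤ lam j)
    (hmono : ∀ j k : ℕ, 1 ≤ j → j ≤ k → k ≤ p → lam k ≤ lam j)
    (s : ℕ)
    (τ : ℝ) (hτ0 : 0 ≤ τ)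
    (β βhat : Fin p → ℝ) (hβ : sparsity p β ≤ s) :
    (τ * sortedL1 p lam (βhat - β) + sortedL1 p lam β - sortedL1 p lam βhat ≤
      (1 + τ) * Real.sqrt (∑ j ∈ Finset.Icc 1 s, lam j ^ 2) * l2 p (βhat - β) -
        (1 - τ) * ∑ j ∈ Finset.univ.filter (fun j : Fin p => s ≤ (j : ℕ)),
          lam ((j : ℕ) + 1) * sharp p (βhat - β) j)
    ∧
    (∀ lam0 : ℝ, 0 < lam0 →
      τ * lam0 * l1 p (βhat - β) + lam0 * l1 p β - lam0 * l1 p βhat ≤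
        (1 + τ) * lam0 * Real.sqrt s * l2 p (βhat - β) -
          (1 - τ) * lam0 * ∑ j ∈ Finset.univ.filter (fun j : Fin p => s ≤ (j : ℕ)),
            sharp p (βhat - β) j) := by
  refine ⟨mul_sortedL1_sub_add_sortedL1_sub_sortedL1_le hnonneg hmono hτ0 hβ, fun lam0 hlam0 => ?_⟩
  have hconst := mul_sortedL1_sub_add_sortedL1_sub_sortedL1_le (lam := fun _ => lam0)
    (fun _ => hlam0.le) (fun _ _ _ _ _ => le_rfl) hτ0 (βhat := βhat) hβ
  have hsqrt : √(∑ _j ∈ Icc 1 s, lam0 ^ 2) = lam0 * √s := by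
    rw [sum_const, Nat.card_Icc, Nat.add_sub_cancel, nsmul_eq_mul,
      Real.sqrt_mul (Nat.cast_nonneg s), Real.sqrt_sq hlam0.le, mul_comm]
  rw [sortedL1_const, sortedL1_const, sortedL1_const, hsqrt, ← mul_sum] at hconst
  linarith

/-- Lemma 1 (algebra of the sorted ℓ₁ norm): for nonincreasing nonnegative weights
`λ₁ ≥ … ≥ λ_p ≥ 0`, `τ ∈ [0,1]`, and `β` with `‖β‖₀ ≤ s`, setting `u = β̂ - β`,
`τ‖u‖₊ + ‖β‖₊ - ‖β̂‖₊ ≤ (1+τ)(∑_{j≤s} λⱼ²)^{1/2}‖u‖₂ - (1-τ)∑_{j>s} λⱼ u♯ⱼ`;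
in particular for constant weights `λⱼ = λ₀ > 0` the analogous ℓ₁ inequality holds. -/
theorem sorted_l1_algebra
    {p : ℕ} (hp : 0 < p)
    (lam : ℕ → ℝ)
    (hnonneg : ∀ j, 0 ≤ lam j)
    (hmono : ∀ j k : ℕ, 1 ≤ j → j ≤ k → k ≤ p → lam k ≤ lam j)
    (s : ℕ) (hs1 : 1 ≤ s) (hsp : s ≤ p)
    (τ : ℝ) (hτ0 : 0 ≤ τ) (hτ1 : τ ≤ 1)
    (β βhat : Fin p → ℝ) (hβ : sparsity p β ≤ s) :
    (τ * sortedL1 p lam (βhat - β) + sortedL1 p lam β - sortedL1 p lam βhat ≤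
      (1 + τ) * Real.sqrt (∑ j ∈ Finset.Icc 1 s, lam j ^ 2) * l2 p (βhat - β) -
        (1 - τ) * ∑ j ∈ Finset.univ.filter (fun j : Fin p => s ≤ (j : ℕ)),
          lam ((j : ℕ) + 1) * sharp p (βhat - β) j)
    ∧
    (∀ lam0 : ℝ, 0 < lam0 →
      τ * lam0 * l1 p (βhat - β) + lam0 * l1 p β - lam0 * l1 p βhat ≤
        (1 + τ) * lam0 * Real.sqrt s * l2 p (βhat - β) -
          (1 - τ) * lam0 * ∑ j ∈ Finset.univ.filter (fun j : Fin p => s ≤ (j : ℕ)),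
            sharp p (βhat - β) j) :=
  sorted_l1_algebra_general lam hnonneg hmono s τ hτ0 β βhat hβ
end
end

section
/- Let g₁,…,g_p be zero-mean Gaussian random variables (not necessarily independent), each with variance at most σ². Let (g₁^♯,…,g_p^♯) be a non-increasing rearrangement of (|g₁|,…,|g_p|). Then for all t > 0 and all s ∈ {1,…,p}: P( (1/(sσ²))·∑_{j=1}^s (g_j^♯)² > t·log(2p/s) ) ≤ (2p/s)^{1 − 3t/8}. -/
open MeasureTheory ProbabilityTheory Real Finset
open scoped ENNReal NNReal BigOperators Classical

noncomputable section

/-- MGF-type bound for a centered Gaussian: if `2cv ≤ 3/4` then `E exp(c g²) ≤ 2`. -/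
lemma lintegral_exp_mul_sq_gaussian (v : ℝ≥0) {c : ℝ} (hc : 0 < c)
    (hcv : 2 * c * v ≤ 3 / 4) :
    ∫⁻ x, ENNReal.ofReal (Real.exp (c * x ^ 2)) ∂(gaussianReal 0 v) ≤ ENNReal.ofReal 2 := by
  have hmeas : Measurable fun x : ℝ => ENNReal.ofReal (Real.exp (c * x ^ 2)) := by
    exact (Real.measurable_exp.comp ((measurable_id.pow_const 2).const_mul c)).ennreal_ofReal
  rcases eq_or_ne v 0 with hv | hv
  · subst hv
    rw [gaussianReal_zero_var, lintegral_dirac' _ hmeas]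
    simp only [ne_eq, OfNat.ofNat_ne_zero, not_false_eq_true, zero_pow, mul_zero, Real.exp_zero]
    exact ENNReal.ofReal_le_ofReal (by norm_num)
  · have hv0 : (0:ℝ) < v := lt_of_le_of_ne v.coe_nonneg (by exact_mod_cast (Ne.symm hv))
    set b : ℝ := (2 * (v:ℝ))⁻¹ - c with hb
    have h2cv : 2 * c * (v:ℝ) ≤ 3 / 4 := hcv
    have hbeq : b = (1 - 2 * c * (v:ℝ)) / (2 * (v:ℝ)) := by
      rw [hb]; field_simp
    have hbpos : 0 < b := by
      rw [hbeq]
      apply div_pos (by linarith) (by positivity)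
    have h2vb : 1 / 4 ≤ 2 * (v:ℝ) * b := by
      rw [hbeq]
      have : 2 * (v:ℝ) * ((1 - 2 * c * (v:ℝ)) / (2 * (v:ℝ))) = 1 - 2 * c * v := by
        field_simp
      rw [this]; linarith
    rw [gaussianReal_of_var_ne_zero _ hv,
      lintegral_withDensity_eq_lintegral_mul _ (measurable_gaussianPDF _ _) hmeas]
    have heq : ∀ x : ℝ, (gaussianPDF 0 v * fun x => ENNReal.ofReal (Real.exp (c * x ^ 2))) x
        = ENNReal.ofReal ((Real.sqrt (2 * π * v))⁻¹ * Real.exp (-b * x ^ 2)) := by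
      intro x
      simp only [Pi.mul_apply, gaussianPDF, gaussianPDFReal]
      rw [← ENNReal.ofReal_mul (by positivity)]
      congr 1
      rw [mul_assoc, ← Real.exp_add]
      congr 1
      rw [hb]
      have hv' : (v:ℝ) ≠ 0 := ne_of_gt hv0
      field_simp
      ring
    simp_rw [heq]
    rw [← ofReal_integral_eq_lintegral_ofReal
      (((integrable_exp_neg_mul_sq hbpos).const_mul _))
      (Filter.Eventually.of_forall fun x => by positivity)]
    rw [integral_const_mul, integral_gaussian]
    apply ENNReal.ofReal_le_ofReal
    have h1 : 0 ≤ (Real.sqrt (2 * π * v))⁻¹ * Real.sqrt (π / b) := by positivity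
    have hsq : ((Real.sqrt (2 * π * v))⁻¹ * Real.sqrt (π / b)) ^ 2 ≤ 4 := by
      rw [mul_pow, ← Real.sqrt_inv, Real.sq_sqrt (by positivity), Real.sq_sqrt (by positivity)]
      have hπ : 0 < π := Real.pi_pos
      have hre : (2 * π * (v:ℝ))⁻¹ * (π / b) = π / (2 * π * v * b) := by
        field_simp
      rw [hre, div_le_iff₀ (by positivity)]
      have hlin := mul_le_mul_of_nonneg_left h2vb Real.pi_pos.le
      ring_nf at hlin ⊢
      linarith
    nlinarith
/-- Proposition 7: for jointly defined zero-mean Gaussian variables `g₁,…,g_p`, each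
with variance at most `σ²`, the sum of the `s` largest squared values satisfies
`P( (1/(sσ²)) ∑_{j≤s} (g♯ⱼ)² > t log(2p/s) ) ≤ (2p/s)^{1-3t/8}`. -/
theorem gaussian_rearrangement_chernoff
    {Ω : Type*} [MeasurableSpace Ω] (P : Measure Ω) [IsProbabilityMeasure P]
    {p : ℕ} (hp : 0 < p) (σ : ℝ) (hσ : 0 < σ)
    (g : Fin p → Ω → ℝ) (hmeas : ∀ j, Measurable (g j))
    (hgauss : ∀ j, ∃ v : ℝ≥0, (v : ℝ) ≤ σ ^ 2 ∧ Measure.map (g j) P = gaussianReal 0 v)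
    (t : ℝ) (ht : 0 < t) (s : ℕ) (hs1 : 1 ≤ s) (hsp : s ≤ p) :
    P {ω | t * Real.log (2 * p / s) <
        1 / (s * σ ^ 2) *
          ∑ j ∈ Finset.univ.filter (fun j : Fin p => (j : ℕ) < s),
            sharp p (fun k => g k ω) j ^ 2} ≤
      ENNReal.ofReal ((2 * (p : ℝ) / s) ^ (1 - 3 * t / 8)) := by
  classical
  have hs0 : (0:ℝ) < s := by exact_mod_cast hs1
  have hp0 : (0:ℝ) < p := by exact_mod_cast hp
  have hσ2 : (0:ℝ) < σ ^ 2 := by positivity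
  set c : ℝ := 3 / (8 * σ ^ 2) with hc
  have hc0 : 0 < c := by positivity
  set L : ℝ := Real.log (2 * p / s) with hLdef
  set F : Finset (Fin p) := Finset.univ.filter (fun j : Fin p => (j : ℕ) < s) with hF
  have hFcard : F.card = s := by
    have h1 : F = Finset.image (fun i : Fin s => Fin.castLE hsp i) Finset.univ := by
      ext j
      simp only [hF, Finset.mem_filter, Finset.mem_univ, true_and, Finset.mem_image]
      constructor
      · intro hj; exact ⟨⟨(j : ℕ), hj⟩, Fin.ext rfl⟩
      · rintro ⟨i, rfl⟩; exact i.2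
    rw [h1, Finset.card_image_of_injective _ (Fin.castLE_injective hsp), Finset.card_univ,
      Fintype.card_fin]
  set ε : ℝ≥0∞ := ENNReal.ofReal (s * Real.exp (3 * t / 8 * L)) with hε
  set h : Ω → ℝ≥0∞ := fun ω => ∑ j : Fin p, ENNReal.ofReal (Real.exp (c * (g j ω) ^ 2))
    with hh
  have hmeas_h : Measurable h := by
    apply Finset.measurable_sum
    intro j _
    exact (Real.measurable_exp.comp (((hmeas j).pow_const 2).const_mul c)).ennreal_ofReal
  -- pointwise key inequality
  have key : ∀ ω : Ω, t * L <
      1 / (s * σ ^ 2) * ∑ j ∈ F, sharp p (fun k => g k ω) j ^ 2 → ε ≤ h ω := by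
    intro ω hω
    set u : Fin p → ℝ := fun k => g k ω with hu
    set σp : Equiv.Perm (Fin p) := Tuple.sort (fun i => -|u i|) with hσp
    have hsharp : ∀ j, sharp p u j ^ 2 = u (σp j) ^ 2 := by
      intro j; rw [sharp, ← hσp, sq_abs]
    -- AM-GM
    have hAM : Real.exp ((1 / (s:ℝ)) * ∑ j ∈ F, c * sharp p u j ^ 2)
        ≤ (1 / (s:ℝ)) * ∑ j ∈ F, Real.exp (c * sharp p u j ^ 2) := by
      have hgm := Real.geom_mean_le_arith_mean_weighted F (fun _ => 1 / (s:ℝ))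
        (fun j => Real.exp (c * sharp p u j ^ 2)) (fun _ _ => by positivity)
        (by rw [Finset.sum_const, hFcard, nsmul_eq_mul]; field_simp)
        (fun _ _ => (Real.exp_pos _).le)
      calc Real.exp ((1 / (s:ℝ)) * ∑ j ∈ F, c * sharp p u j ^ 2)
          = ∏ j ∈ F, Real.exp (c * sharp p u j ^ 2) ^ ((1:ℝ) / s) := by
            rw [Finset.mul_sum, Real.exp_sum]
            refine Finset.prod_congr rfl fun j _ => ?_
            rw [← Real.exp_mul, mul_comm]
        _ ≤ ∑ j ∈ F, (1 / (s:ℝ)) * Real.exp (c * sharp p u j ^ 2) := hgm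
        _ = (1 / (s:ℝ)) * ∑ j ∈ F, Real.exp (c * sharp p u j ^ 2) := by
            rw [Finset.mul_sum]
    -- extend sum to all coordinates
    have hext : ∑ j ∈ F, Real.exp (c * sharp p u j ^ 2)
        ≤ ∑ j : Fin p, Real.exp (c * u j ^ 2) := by
      have : ∑ j ∈ F, Real.exp (c * sharp p u j ^ 2)
          = ∑ j ∈ F.map σp.toEmbedding, Real.exp (c * u j ^ 2) := by
        rw [Finset.sum_map]
        exact Finset.sum_congr rfl fun j _ => by rw [hsharp]; rfl
      rw [this]
      exact Finset.sum_le_sum_of_subset_of_nonneg (Finset.subset_univ _)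
        (fun _ _ _ => (Real.exp_pos _).le)
    -- chain
    have h38 : 3 * t / 8 * L < (1 / (s:ℝ)) * ∑ j ∈ F, c * sharp p u j ^ 2 := by
      rw [← Finset.mul_sum, hc]
      have := hω
      have hT : t * L < 1 / (s * σ ^ 2) * ∑ j ∈ F, sharp p u j ^ 2 := hω
      set T : ℝ := ∑ j ∈ F, sharp p u j ^ 2 with hT'
      have : 1 / (s:ℝ) * (3 / (8 * σ ^ 2) * T) = 3 / 8 * (1 / (s * σ ^ 2) * T) := by
        ring
      rw [this]
      nlinarith
    have hreal : (s:ℝ) * Real.exp (3 * t / 8 * L) ≤ ∑ j : Fin p, Real.exp (c * u j ^ 2) := by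
      have h1 : Real.exp (3 * t / 8 * L)
          ≤ (1 / (s:ℝ)) * ∑ j : Fin p, Real.exp (c * u j ^ 2) := by
        calc Real.exp (3 * t / 8 * L)
            ≤ Real.exp ((1 / (s:ℝ)) * ∑ j ∈ F, c * sharp p u j ^ 2) :=
              Real.exp_le_exp.mpr h38.le
          _ ≤ (1 / (s:ℝ)) * ∑ j ∈ F, Real.exp (c * sharp p u j ^ 2) := hAM
          _ ≤ (1 / (s:ℝ)) * ∑ j : Fin p, Real.exp (c * u j ^ 2) := by
              apply mul_le_mul_of_nonneg_left hext (by positivity)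
      calc (s:ℝ) * Real.exp (3 * t / 8 * L)
          ≤ (s:ℝ) * ((1 / (s:ℝ)) * ∑ j : Fin p, Real.exp (c * u j ^ 2)) :=
            mul_le_mul_of_nonneg_left h1 hs0.le
        _ = ∑ j : Fin p, Real.exp (c * u j ^ 2) := by field_simp
    rw [hε, hh]
    calc ENNReal.ofReal ((s:ℝ) * Real.exp (3 * t / 8 * L))
        ≤ ENNReal.ofReal (∑ j : Fin p, Real.exp (c * u j ^ 2)) :=
          ENNReal.ofReal_le_ofReal hreal
      _ = ∑ j : Fin p, ENNReal.ofReal (Real.exp (c * (g j ω) ^ 2)) := by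
          rw [ENNReal.ofReal_sum_of_nonneg (fun j _ => (Real.exp_pos _).le)]
  -- integral bound
  have hint : ∀ j : Fin p, ∫⁻ ω, ENNReal.ofReal (Real.exp (c * (g j ω) ^ 2)) ∂P
      ≤ ENNReal.ofReal 2 := by
    intro j
    obtain ⟨v, hv, hmap⟩ := hgauss j
    have hint_meas : Measurable fun x : ℝ => ENNReal.ofReal (Real.exp (c * x ^ 2)) :=
      (Real.measurable_exp.comp ((measurable_id.pow_const 2).const_mul c)).ennreal_ofReal
    have : ∫⁻ ω, ENNReal.ofReal (Real.exp (c * (g j ω) ^ 2)) ∂P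
        = ∫⁻ x, ENNReal.ofReal (Real.exp (c * x ^ 2)) ∂(gaussianReal 0 v) := by
      rw [← hmap, lintegral_map hint_meas (hmeas j)]
    rw [this]
    apply lintegral_exp_mul_sq_gaussian v hc0
    rw [hc]
    have : 2 * (3 / (8 * σ ^ 2)) * (v:ℝ) = 3 * (v:ℝ) / (4 * σ ^ 2) := by field_simp; ring
    rw [this, div_le_div_iff₀ (by positivity) (by positivity)]
    nlinarith
  have hlint : ∫⁻ ω, h ω ∂P ≤ ENNReal.ofReal (2 * p) := by
    rw [hh]
    rw [lintegral_finset_sum]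
    · calc ∑ j : Fin p, ∫⁻ ω, ENNReal.ofReal (Real.exp (c * (g j ω) ^ 2)) ∂P
          ≤ ∑ _j : Fin p, ENNReal.ofReal 2 := Finset.sum_le_sum fun j _ => hint j
        _ = p * ENNReal.ofReal 2 := by
            rw [Finset.sum_const, Finset.card_univ, Fintype.card_fin, nsmul_eq_mul]
        _ = ENNReal.ofReal (2 * p) := by
            rw [ENNReal.ofReal_mul (by norm_num), ENNReal.ofReal_natCast, mul_comm]
    · intro j _
      exact (Real.measurable_exp.comp (((hmeas j).pow_const 2).const_mul c)).ennreal_ofReal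
  have hε0 : ε ≠ 0 := by
    rw [hε, ne_eq, ENNReal.ofReal_eq_zero, not_le]
    positivity
  have hεtop : ε ≠ ⊤ := ENNReal.ofReal_ne_top
  -- final computation
  have hbase : (0:ℝ) < 2 * p / s := by positivity
  have hfinal : 2 * (p:ℝ) / ((s:ℝ) * Real.exp (3 * t / 8 * L))
      = (2 * p / s) ^ (1 - 3 * t / 8) := by
    rw [show (1 - 3 * t / 8 : ℝ) = 1 + -(3 * t / 8) by ring, Real.rpow_add hbase,
      Real.rpow_one, Real.rpow_def_of_pos hbase, ← hLdef, mul_comm L (-(3 * t / 8)), neg_mul,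
      Real.exp_neg]
    field_simp
  calc P {ω | t * L < 1 / (s * σ ^ 2) * ∑ j ∈ F, sharp p (fun k => g k ω) j ^ 2}
      ≤ P {ω | ε ≤ h ω} := measure_mono fun ω hω => key ω hω
    _ ≤ (∫⁻ ω, h ω ∂P) / ε := meas_ge_le_lintegral_div hmeas_h.aemeasurable hε0 hεtop
    _ ≤ ENNReal.ofReal (2 * p) / ε := by gcongr
    _ = ENNReal.ofReal (2 * (p:ℝ) / ((s:ℝ) * Real.exp (3 * t / 8 * L))) := by
        rw [hε, ← ENNReal.ofReal_div_of_pos (by positivity)]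
    _ = ENNReal.ofReal ((2 * (p:ℝ) / s) ^ (1 - 3 * t / 8)) := by rw [hfinal]
end
end

section
/- Let g₁,…,g_p be zero-mean Gaussian random variables (not necessarily independent), each with variance at most σ². Let (g₁^♯,…,g_p^♯) be a non-increasing rearrangement of (|g₁|,…,|g_p|). Then P( max_{j=1,…,p} g_j^♯/(σ√(log(2p/j))) ≤ 4 ) ≥ 1/2. -/
open MeasureTheory ProbabilityTheory Real Finset
open scoped ENNReal NNReal BigOperators Classical

noncomputable section

lemma gauss_exp_bound (σ : ℝ) (hσ : 0 < σ) (v : ℝ≥0) (hv : (v:ℝ) ≤ σ^2) :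
    ∫⁻ x, ENNReal.ofReal (rexp (x^2 / (8*σ^2))) ∂(gaussianReal 0 v)
      ≤ ENNReal.ofReal (Real.sqrt (4/3)) := by
  have hmf : Measurable fun x : ℝ => ENNReal.ofReal (rexp (x^2 / (8*σ^2))) :=
    (((measurable_id.pow_const 2).div_const _).exp).ennreal_ofReal
  by_cases h0 : v = 0
  · subst h0
    rw [gaussianReal_zero_var, lintegral_dirac' _ hmf]
    simp only [ne_eq, OfNat.ofNat_ne_zero, not_false_eq_true, zero_pow, zero_div, Real.exp_zero,
      ENNReal.ofReal_one]
    rw [← ENNReal.ofReal_one]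
    exact ENNReal.ofReal_le_ofReal (Real.one_le_sqrt.mpr (by norm_num))
  · have hv0 : (0:ℝ) < v := by positivity
    have hσ2 : (0:ℝ) < σ^2 := by positivity
    set V : ℝ := (v : ℝ) with hV
    set a : ℝ := 1/(2*V) - 1/(8*σ^2) with hadef
    have ha : 0 < a := by
      rw [hadef]
      have h1 : 1/(2*V) ≥ 1/(2*σ^2) := by
        apply one_div_le_one_div_of_le (by positivity) (by nlinarith)
      have h2 : 1/(2*σ^2) > 1/(8*σ^2) := by
        apply one_div_lt_one_div_of_lt (by positivity) (by nlinarith)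
      linarith
    rw [gaussianReal_of_var_ne_zero _ h0,
      lintegral_withDensity_eq_lintegral_mul _ (measurable_gaussianPDF 0 v) hmf]
    have heq : ∀ x : ℝ, (gaussianPDF 0 v * fun x => ENNReal.ofReal (rexp (x^2/(8*σ^2)))) x
        = ENNReal.ofReal ((√(2*π*V))⁻¹ * rexp (-a * x^2)) := by
      intro x
      simp only [Pi.mul_apply, gaussianPDF, gaussianPDFReal]
      rw [← ENNReal.ofReal_mul (by positivity)]
      congr 1
      rw [mul_assoc, ← Real.exp_add]
      congr 2
      rw [hadef]
      ring
    simp only [heq]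
    rw [← ofReal_integral_eq_lintegral_ofReal
      ((integrable_exp_neg_mul_sq ha).const_mul _)
      (ae_of_all _ fun x => by positivity)]
    apply ENNReal.ofReal_le_ofReal
    rw [integral_const_mul, integral_gaussian]
    -- (√(2πV))⁻¹ * √(π/a) ≤ √(4/3)
    have h8 : 3 ≤ 8*V*a := by
      have h1 : V/σ^2 ≤ 1 := div_le_one_of_le₀ hv (by positivity)
      have h2 : 8*V*a = 4 - V/σ^2 := by
        rw [hadef]
        field_simp
        ring
      rw [h2]
      linarith
    have hπ := Real.pi_pos
    have key : (π/a)/(2*π*V) ≤ 4/3 := by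
      rw [div_div, div_le_div_iff₀ (by positivity) (by norm_num)]
      nlinarith [mul_le_mul_of_nonneg_left h8 hπ.le]
    have hval : (√(2*π*V))⁻¹ * √(π/a) = √((π/a)/(2*π*V)) := by
      rw [Real.sqrt_div (by positivity : (0:ℝ) ≤ π/a)]
      ring
    rw [hval]
    exact Real.sqrt_le_sqrt key

lemma sharp_key (p : ℕ) (σ : ℝ) (hσ : 0 < σ) (u : Fin p → ℝ) (j : Fin p)
    (h : ¬ (sharp p u j / (σ * Real.sqrt (Real.log (2 * p / ((j : ℕ) + 1)))) ≤ 4)) :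
    4 * p ≤ ∑ i, rexp ((u i)^2 / (8*σ^2)) := by
  have hjp : ((j : ℕ) : ℝ) + 1 ≤ (p : ℝ) := by
    have := j.2
    exact_mod_cast this
  have hk0 : (0:ℝ) < ((j : ℕ) : ℝ) + 1 := by positivity
  have hp0 : (0:ℝ) < (p:ℝ) := lt_of_lt_of_le hk0 hjp
  set k : ℝ := ((j : ℕ) : ℝ) + 1 with hkdef
  set L : ℝ := Real.log (2 * p / k) with hLdef
  have hratio : (1:ℝ) < 2 * p / k := by
    rw [lt_div_iff₀ hk0]
    linarith
  have hL : 0 < L := Real.log_pos hratio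
  have hd : 0 < σ * Real.sqrt L := by positivity
  push_neg at h
  have hsharp : 4 * (σ * Real.sqrt L) < sharp p u j := by
    rwa [lt_div_iff₀ hd] at h
  -- antitone
  have hmono := Tuple.monotone_sort (fun i : Fin p => -|u i|)
  have hanti : ∀ i : Fin p, i ≤ j → sharp p u j ≤ sharp p u i := by
    intro i hij
    have := hmono hij
    simp only [Function.comp_apply] at this
    simpa [sharp] using neg_le_neg_iff.mp this
  -- each term on Iic j is large
  have hterm : ∀ i ∈ Finset.Iic j, (2 * p / k)^2 ≤ rexp ((sharp p u i)^2 / (8*σ^2)) := by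
    intro i hi
    have hij : i ≤ j := Finset.mem_Iic.mp hi
    have h1 : 4 * (σ * Real.sqrt L) ≤ sharp p u i := le_trans hsharp.le (hanti i hij)
    have h2 : (4 * (σ * Real.sqrt L))^2 ≤ (sharp p u i)^2 := by
      apply pow_le_pow_left₀ (by positivity) h1
    have h3 : (4 * (σ * Real.sqrt L))^2 = 16 * σ^2 * L := by
      rw [mul_pow, mul_pow, Real.sq_sqrt hL.le]
      ring
    have h4 : 2 * L ≤ (sharp p u i)^2 / (8*σ^2) := by
      rw [le_div_iff₀ (by positivity)]
      nlinarith
    calc (2 * p / k)^2 = rexp (2 * L) := by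
          rw [show (2:ℝ) * L = L + L by ring, Real.exp_add, hLdef,
            Real.exp_log (div_pos (by linarith) hk0)]
          ring
      _ ≤ rexp ((sharp p u i)^2 / (8*σ^2)) := Real.exp_le_exp.mpr h4
  -- sum over Iic j
  have hcard : (Finset.Iic j).card = (j : ℕ) + 1 := Fin.card_Iic j
  have hsum1 : ((j:ℕ) + 1) • ((2 * p / k)^2)
      ≤ ∑ i ∈ Finset.Iic j, rexp ((sharp p u i)^2 / (8*σ^2)) := by
    rw [← hcard]
    exact Finset.card_nsmul_le_sum _ _ _ hterm
  have hsum2 : ∑ i ∈ Finset.Iic j, rexp ((sharp p u i)^2 / (8*σ^2))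
      ≤ ∑ i, rexp ((sharp p u i)^2 / (8*σ^2)) :=
    Finset.sum_le_sum_of_subset_of_nonneg (Finset.subset_univ _)
      (fun i _ _ => (Real.exp_pos _).le)
  have hperm : ∑ i, rexp ((sharp p u i)^2 / (8*σ^2)) = ∑ i, rexp ((u i)^2 / (8*σ^2)) := by
    have he := Equiv.sum_comp (Tuple.sort fun i : Fin p => -|u i|)
      (fun i => rexp ((u i)^2 / (8*σ^2)))
    rw [← he]
    apply Finset.sum_congr rfl
    intro i _
    simp [sharp, sq_abs]
  have hfinal : 4 * (p:ℝ) ≤ ((j:ℕ) + 1) • ((2 * p / k)^2) := by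
    rw [nsmul_eq_mul]
    have hcast : (((j:ℕ) + 1 : ℕ) : ℝ) = k := by rw [hkdef]; push_cast; ring
    rw [hcast]
    have heq : k * (2 * (p:ℝ) / k)^2 = 4 * ((p:ℝ)^2) / k := by
      field_simp
      ring
    rw [heq, le_div_iff₀ hk0]
    nlinarith
  calc 4 * (p:ℝ) ≤ _ := hfinal
    _ ≤ _ := hsum1
    _ ≤ _ := hsum2
    _ = _ := hperm

/-- Proposition 8: for jointly defined zero-mean Gaussian variables `g₁,…,g_p`, each
with variance at most `σ²`, `P( max_j g♯ⱼ/(σ√(log(2p/j))) ≤ 4 ) ≥ 1/2`. -/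
theorem gaussian_rearrangement_max
    {Ω : Type*} [MeasurableSpace Ω] (P : Measure Ω) [IsProbabilityMeasure P]
    {p : ℕ} (hp : 0 < p) (σ : ℝ) (hσ : 0 < σ)
    (g : Fin p → Ω → ℝ) (hmeas : ∀ j, Measurable (g j))
    (hgauss : ∀ j, ∃ v : ℝ≥0, (v : ℝ) ≤ σ ^ 2 ∧ Measure.map (g j) P = gaussianReal 0 v) :
    (1 : ℝ≥0∞) / 2 ≤
      P {ω | ∀ j : Fin p,
        sharp p (fun k => g k ω) j /
            (σ * Real.sqrt (Real.log (2 * p / ((j : ℕ) + 1)))) ≤ 4} := by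
  set Z : Ω → ℝ := fun ω => ∑ i, rexp ((g i ω)^2 / (8*σ^2)) with hZdef
  have hZm : ∀ i : Fin p, Measurable fun ω => rexp ((g i ω)^2 / (8*σ^2)) :=
    fun i => (((hmeas i).pow_const 2).div_const _).exp
  have hZmeas : Measurable Z := Finset.measurable_sum _ fun i _ => hZm i
  set B : Set Ω := {ω | ENNReal.ofReal (4*p) ≤ ENNReal.ofReal (Z ω)} with hBdef
  have hBmeas : MeasurableSet B :=
    measurableSet_le measurable_const hZmeas.ennreal_ofReal
  -- Markov bound
  have hmarkov : ENNReal.ofReal (4*p) * P B ≤ ∫⁻ ω, ENNReal.ofReal (Z ω) ∂P :=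
    mul_meas_ge_le_lintegral hZmeas.ennreal_ofReal _
  have hlint : ∫⁻ ω, ENNReal.ofReal (Z ω) ∂P
      ≤ (p : ℝ≥0∞) * ENNReal.ofReal (Real.sqrt (4/3)) := by
    have h1 : ∀ ω, ENNReal.ofReal (Z ω)
        = ∑ i, ENNReal.ofReal (rexp ((g i ω)^2 / (8*σ^2))) := by
      intro ω
      exact ENNReal.ofReal_sum_of_nonneg fun i _ => (Real.exp_pos _).le
    simp_rw [h1]
    rw [lintegral_finset_sum _ fun i _ => (hZm i).ennreal_ofReal]
    have h2 : ∀ i : Fin p, ∫⁻ ω, ENNReal.ofReal (rexp ((g i ω)^2 / (8*σ^2))) ∂P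
        ≤ ENNReal.ofReal (Real.sqrt (4/3)) := by
      intro i
      obtain ⟨v, hv, hmap⟩ := hgauss i
      have hmf : Measurable fun x : ℝ => ENNReal.ofReal (rexp (x^2 / (8*σ^2))) :=
        (((measurable_id.pow_const 2).div_const _).exp).ennreal_ofReal
      calc ∫⁻ ω, ENNReal.ofReal (rexp ((g i ω)^2 / (8*σ^2))) ∂P
          = ∫⁻ x, ENNReal.ofReal (rexp (x^2 / (8*σ^2))) ∂(Measure.map (g i) P) :=
            (lintegral_map hmf (hmeas i)).symm
        _ = ∫⁻ x, ENNReal.ofReal (rexp (x^2 / (8*σ^2))) ∂(gaussianReal 0 v) := by rw [hmap]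
        _ ≤ ENNReal.ofReal (Real.sqrt (4/3)) := gauss_exp_bound σ hσ v hv
    calc ∑ i : Fin p, ∫⁻ ω, ENNReal.ofReal (rexp ((g i ω)^2 / (8*σ^2))) ∂P
        ≤ ∑ _i : Fin p, ENNReal.ofReal (Real.sqrt (4/3)) := Finset.sum_le_sum fun i _ => h2 i
      _ = (p : ℝ≥0∞) * ENNReal.ofReal (Real.sqrt (4/3)) := by
          rw [Finset.sum_const, Finset.card_univ, Fintype.card_fin, nsmul_eq_mul]
  -- P B ≤ 1/2
  have hPB : P B ≤ 1/2 := by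
    have hne0 : ENNReal.ofReal (4*p) ≠ 0 := by
      simp only [ne_eq, ENNReal.ofReal_eq_zero, not_le]
      have : (0:ℝ) < (p:ℝ) := by exact_mod_cast hp
      linarith
    have hnetop : ENNReal.ofReal (4*p) ≠ ⊤ := ENNReal.ofReal_ne_top
    rw [mul_comm, ← ENNReal.le_div_iff_mul_le (Or.inl hne0) (Or.inl hnetop)] at hmarkov
    refine le_trans (le_trans hmarkov (ENNReal.div_le_div_right hlint _)) ?_
    have hpR : (0:ℝ) < (p:ℝ) := by exact_mod_cast hp
    have hs : Real.sqrt (4/3) ≤ 2 := by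
      rw [show (2:ℝ) = Real.sqrt 4 by rw [show (4:ℝ) = 2^2 by norm_num, Real.sqrt_sq]; norm_num]
      exact Real.sqrt_le_sqrt (by norm_num)
    have h1 : (↑p : ℝ≥0∞) * ENNReal.ofReal (Real.sqrt (4/3)) ≤ ENNReal.ofReal (2*(p:ℝ)) := by
      rw [show ((p:ℕ) : ℝ≥0∞) = ENNReal.ofReal (p : ℝ) by rw [ENNReal.ofReal_natCast],
        ← ENNReal.ofReal_mul (by positivity)]
      apply ENNReal.ofReal_le_ofReal
      nlinarith [Real.sqrt_nonneg (4/3 : ℝ)]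
    refine le_trans (ENNReal.div_le_div_right h1 _) ?_
    rw [← ENNReal.ofReal_div_of_pos (by positivity : (0:ℝ) < 4*(p:ℝ))]
    rw [show (2*(p:ℝ))/(4*(p:ℝ)) = (1/2 : ℝ) by
      rw [div_eq_div_iff (by positivity) (by norm_num)]; ring]
    rw [ENNReal.ofReal_div_of_pos (by norm_num), ENNReal.ofReal_one, ENNReal.ofReal_ofNat]
  -- conclude
  have hsub : Bᶜ ⊆ {ω | ∀ j : Fin p,
      sharp p (fun k => g k ω) j /
        (σ * Real.sqrt (Real.log (2 * p / ((j : ℕ) + 1)))) ≤ 4} := by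
    intro ω hω
    simp only [Set.mem_compl_iff, hBdef, Set.mem_setOf_eq, not_le] at hω
    intro j
    by_contra hcon
    have h4p := sharp_key p σ hσ (fun k => g k ω) j hcon
    exact absurd (ENNReal.ofReal_le_ofReal h4p) (not_le.mpr hω)
  calc (1 : ℝ≥0∞) / 2 = 1 - 1/2 := by
        rw [ENNReal.sub_half ENNReal.one_ne_top]
    _ ≤ 1 - P B := tsub_le_tsub_left hPB 1
    _ = P Bᶜ := (prob_compl_eq_one_sub hBmeas).symm
    _ ≤ _ := measure_mono hsub
end
end
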